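/- arXiv:2207.12336 — 8 statements merged into one kernel-verified Lean document; each statement's English description precedes it below -/
import Mathlib

section
/- Let G be a graph on n > 2 vertices with n even and k = n/2. Then the complement automorphism 𝔠 of F_k(G) (sending each k-set to its complement) is not in the image of ι : Aut(G) → Aut(F_k(G)), where ι(φ)(A) = {φ(v) : v ∈ A}. -/
open Finset

/-- The `k`-token graph of a graph `G`. -/
def tokenGraph {V : Type*} [DecidableEq V] (G : SimpleGraph V) (k : ℕ) :
    SimpleGraph {s : Finset V // s.card = k} where
  Adj A B := ∃ a b : V, G.Adj a b ∧ symmDiff A.1 B.1 = {a, b}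
  symm := by
    constructor
    rintro A B ⟨a, b, hab, h⟩
    exact ⟨a, b, hab, by rwa [symmDiff_comm]⟩
  loopless := by
    constructor
    rintro A ⟨a, b, hab, h⟩
    rw [symmDiff_self] at h
    exact (Finset.insert_ne_empty a {b}) h.symm

/-- A `k`-set containing both `x` and `f x` meets its own image. -/
theorem Finset.exists_card_eq_not_disjoint_image {V : Type*} [Fintype V] [DecidableEq V]
    (f : V → V) {k : ℕ} (hk : 2 ≤ k) (hkV : k ≤ Fintype.card V) :
    ∃ A : Finset V, A.card = k ∧ ¬ Disjoint (A.image f) A := by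
  obtain ⟨x⟩ : Nonempty V := Fintype.card_pos_iff.mp (by omega)
  have hpair : ({x, f x} : Finset V).card ≤ k := card_le_two.trans hk
  obtain ⟨A, hxA, hA⟩ := exists_superset_card_eq hpair hkV
  exact ⟨A, hA, not_disjoint_iff.mpr ⟨f x, mem_image_of_mem f (hxA (by simp)), hxA (by simp)⟩⟩

/-- For n > 2 even and k = n/2, the complement automorphism of
F_k(G) is not induced by any automorphism of G. -/
theorem complement_not_induced {V : Type*} [Fintype V] [DecidableEq V]
    (G : SimpleGraph V) (n k : ℕ)
    (hn : Fintype.card V = n) (hn2 : 2 < n) (hk : n = 2 * k) :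
    ¬ ∃ φ : G ≃g G,
        ∀ A : {s : Finset V // s.card = k}, A.1.image φ = A.1ᶜ := by
  rintro ⟨φ, hφ⟩
  obtain ⟨A, hA, hmeet⟩ :=
    exists_card_eq_not_disjoint_image φ (k := k) (by omega) (by omega)
  exact hmeet (hφ ⟨A, hA⟩ ▸ disjoint_compl_left)
end

section
/- Let G be a graph on n ≥ 3 vertices, n even, k = n/2. For every automorphism ψ of G, the induced automorphism ι(ψ) of F_k(G) commutes with the complement automorphism 𝔠, and 𝔠² is the identity; consequently the subgroup of Aut(F_k(G)) generated by ι(Aut(G)) and 𝔠 is isomorphic to Aut(G) × ℤ/2ℤ. -/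
open Finset

/-!
Induced automorphisms `ψ ↦ ι ψ` form a homomorphism, injective as soon as `0 < k < n`: a
non-identity `ψ` moves a `k`-set containing some `u` but not `ψ u`. Complementation is an
involution commuting with every bijection of `V`, and for `k ≥ 2` it is not induced by any `ψ`,
since a `k`-set containing both `u` and `ψ u` meets its `ψ`-image. So `ι(Aut G)` and `⟨𝔠⟩ ≅ ℤ/2`
are commuting subgroups meeting trivially, and they generate their internal direct product.
-/

open Subgroup in
theorem MonoidHom.nonempty_closure_range_union_singleton_mulEquiv_prod {K H : Type*} [Group K]
    [Group H] (ι : K →* H) (hι : Function.Injective ι) (c : H) (hcomm : ∀ x, Commute c (ι x))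
    (hdisj : Disjoint ι.range (zpowers c)) :
    Nonempty (closure (Set.range ι ∪ {c}) ≃* K × Multiplicative (ZMod (orderOf c))) := by
  let e := zmodCyclicMulEquiv (isCyclic_zpowers c)
  let g := (zpowers c).subtype.comp e.toMonoidHom
  have hg_range : g.range = zpowers c := by
    have he : e.toMonoidHom.range = ⊤ := MonoidHom.range_eq_top.mpr e.surjective
    rw [MonoidHom.range_comp, he, ← MonoidHom.range_eq_map, range_subtype]
  have hcomm' : ∀ x m, Commute (ι x) (g m) := fun x m => by
    obtain ⟨j, hj⟩ := mem_zpowers_iff.mp (e m).2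
    change Commute (ι x) (e m : H)
    rw [← hj]
    exact (hcomm x).symm.zpow_right j
  have hΦ := (MonoidHom.noncommCoprod_injective ι g hcomm').mpr
    ⟨hι, (zpowers c).subtype_injective.comp e.injective, by rwa [hg_range]⟩
  have hrange : (ι.noncommCoprod g hcomm').range = closure (Set.range ι ∪ {c}) := by
    rw [MonoidHom.noncommCoprod_range, hg_range, Subgroup.closure_union, ← MonoidHom.coe_range,
      closure_eq, zpowers_eq_closure]
  rw [← Nat.card_zpowers]
  exact ⟨(MulEquiv.subgroupCongr hrange.symm).trans (MonoidHom.ofInjective hΦ).symm⟩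

theorem Subgroup.disjoint_zpowers_of_mul_self_eq_one {H : Type*} [Group H] {K : Subgroup H}
    {c : H} (hc : c * c = 1) (hcK : c ∉ K) : Disjoint K (zpowers c) := by
  rw [disjoint_def]
  rintro x hxK hx
  obtain ⟨j, rfl⟩ := mem_zpowers_iff.mp hx
  have hj : c ^ j = c ^ (j % 2) := zpow_eq_zpow_emod' j (by rw [sq, hc])
  rcases Int.emod_two_eq_zero_or_one j with h | h
  · simpa [h] using hj
  · rw [hj, h, zpow_one] at hxK
    exact absurd hxK hcK

namespace tokenGraph

section iso

variable {V W : Type*} [DecidableEq V] [DecidableEq W] {G : SimpleGraph V} {H : SimpleGraph W}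
  {k : ℕ}

theorem adj_image_of_adj (ψ : G ≃g H) {A B : {s : Finset V // s.card = k}}
    (h : (tokenGraph G k).Adj A B) :
    ∃ a b : W, H.Adj a b ∧ symmDiff (A.1.image ψ) (B.1.image ψ) = {a, b} := by
  obtain ⟨a, b, hab, h⟩ := h
  refine ⟨ψ a, ψ b, ψ.map_adj_iff.2 hab, ?_⟩
  rw [← Finset.image_symmDiff _ _ ψ.injective, h, Finset.image_insert, Finset.image_singleton]

def mapIso (ψ : G ≃g H) : tokenGraph G k ≃g tokenGraph H k where
  toFun A := ⟨A.1.image ψ, by rw [Finset.card_image_of_injective _ ψ.injective, A.2]⟩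
  invFun A := ⟨A.1.image ψ.symm, by rw [Finset.card_image_of_injective _ ψ.symm.injective, A.2]⟩
  left_inv A := Subtype.ext (by simp [Finset.image_image, Function.comp_def])
  right_inv A := Subtype.ext (by simp [Finset.image_image, Function.comp_def])
  map_rel_iff' {A B} := by
    refine ⟨fun h => ?_, adj_image_of_adj ψ⟩
    show ∃ a b, G.Adj a b ∧ symmDiff A.1 B.1 = {a, b}
    simpa [Finset.image_image, Function.comp_def] using adj_image_of_adj ψ.symm h

@[simp]
theorem coe_mapIso_apply (ψ : G ≃g H) (A : {s : Finset V // s.card = k}) :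
    (mapIso ψ A).1 = A.1.image ψ := rfl

end iso

variable {V : Type*} [DecidableEq V] {G : SimpleGraph V} {k : ℕ}

def autHom : (G ≃g G) →* (tokenGraph G k ≃g tokenGraph G k) where
  toFun := mapIso
  map_one' := RelIso.ext fun A => Subtype.ext (by simp)
  map_mul' ψ φ := RelIso.ext fun A => Subtype.ext (by simp [Finset.image_image])

theorem autHom_injective [Fintype V] (hk : 0 < k) (hkV : k < Fintype.card V) :
    Function.Injective (autHom (G := G) (k := k)) := by
  rw [injective_iff_map_eq_one]
  intro ψ hψ
  ext u
  by_contra hne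
  obtain ⟨A, huA, hAv, hA⟩ := Finset.exists_subsuperset_card_eq
    (Finset.singleton_subset_iff.mpr (Finset.mem_erase.mpr ⟨Ne.symm hne, Finset.mem_univ u⟩))
    (by simpa using Nat.one_le_of_lt hk)
    (by simpa [Finset.card_erase_of_mem] using Nat.le_sub_one_of_lt hkV)
  have hfix : A.image ψ = A := congrArg (fun f => (f ⟨A, hA⟩).1) hψ
  have : ψ u ∈ A := hfix ▸ Finset.mem_image_of_mem ψ (huA (Finset.mem_singleton_self u))
  exact Finset.notMem_erase _ _ (hAv this)

section compl

variable [Fintype V]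

def compl (h : Fintype.card V = 2 * k) : tokenGraph G k ≃g tokenGraph G k where
  toFun A := ⟨A.1ᶜ, by rw [Finset.card_compl, A.2, h]; omega⟩
  invFun A := ⟨A.1ᶜ, by rw [Finset.card_compl, A.2, h]; omega⟩
  left_inv A := Subtype.ext (compl_compl _)
  right_inv A := Subtype.ext (compl_compl _)
  map_rel_iff' {A B} := by
    change (∃ a b, G.Adj a b ∧ symmDiff A.1ᶜ B.1ᶜ = {a, b}) ↔ _
    rw [compl_symmDiff_compl]
    rfl

theorem compl_mul_self (h : Fintype.card V = 2 * k) :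
    compl (G := G) h * compl h = 1 :=
  RelIso.ext fun A => Subtype.ext (compl_compl A.1)

theorem commute_compl_autHom (h : Fintype.card V = 2 * k) (ψ : G ≃g G) :
    Commute (compl h) (autHom (k := k) ψ) :=
  RelIso.ext fun A => Subtype.ext (by
    change (A.1.image ψ)ᶜ = A.1ᶜ.image ψ
    ext x
    obtain ⟨y, rfl⟩ := ψ.surjective x
    simp [ψ.injective.eq_iff])

theorem compl_notMem_range_autHom (h : Fintype.card V = 2 * k) (hk : 2 ≤ k) :
    compl (G := G) h ∉ (autHom (k := k)).range := by
  rintro ⟨ψ, hψ⟩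
  obtain ⟨u⟩ : Nonempty V := Fintype.card_pos_iff.mp (by omega)
  obtain ⟨A, huA, -, hA⟩ := Finset.exists_subsuperset_card_eq (Finset.subset_univ {u, ψ u})
    ((Finset.card_le_two).trans hk) (by rw [Finset.card_univ, h]; omega)
  have : A.image ψ = Aᶜ := congrArg (fun f => (f ⟨A, hA⟩).1) hψ
  have hψu : ψ u ∈ A.image ψ := Finset.mem_image_of_mem ψ (huA (by simp))
  rw [this, Finset.mem_compl] at hψu
  exact hψu (huA (by simp))

end compl

end tokenGraph

/-- For n ≥ 3, k = n/2: induced automorphisms commute with the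
complement automorphism 𝔠, 𝔠² = 1, and the subgroup of Aut(F_k(G)) generated by
ι(Aut(G)) and 𝔠 is isomorphic to Aut(G) × ℤ/2ℤ. -/
theorem complement_commutes_and_group {V : Type*} [Fintype V] [DecidableEq V]
    (G : SimpleGraph V) (n k : ℕ)
    (hn : Fintype.card V = n) (hn3 : 3 ≤ n) (hk : n = 2 * k) :
    ∃ c : tokenGraph G k ≃g tokenGraph G k,
      (∀ A : {s : Finset V // s.card = k}, (c A).1 = A.1ᶜ) ∧
      ∃ ι : (G ≃g G) →* (tokenGraph G k ≃g tokenGraph G k),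
        (∀ (ψ : G ≃g G) (A : {s : Finset V // s.card = k}),
            ((ι ψ) A).1 = A.1.image ψ) ∧
        (∀ ψ : G ≃g G, c * ι ψ = ι ψ * c) ∧
        (c * c = 1) ∧
        Nonempty
          ((Subgroup.closure (Set.range ι ∪ {c}) : Subgroup (tokenGraph G k ≃g tokenGraph G k))
            ≃* (G ≃g G) × Multiplicative (ZMod 2)) := by
  have hV : Fintype.card V = 2 * k := hn.trans hk
  have hc_range := tokenGraph.compl_notMem_range_autHom (G := G) hV (by omega)
  have hc_order : orderOf (tokenGraph.compl (G := G) hV) = 2 :=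
    orderOf_eq_prime (by rw [sq, tokenGraph.compl_mul_self]) fun h1 => hc_range (h1 ▸ one_mem _)
  refine ⟨tokenGraph.compl hV, fun _ => rfl, tokenGraph.autHom, fun _ _ => rfl,
    fun ψ => (tokenGraph.commute_compl_autHom hV ψ).eq, tokenGraph.compl_mul_self hV, ?_⟩
  have := tokenGraph.autHom.nonempty_closure_range_union_singleton_mulEquiv_prod
    (tokenGraph.autHom_injective (by omega) (by omega)) _ (tokenGraph.commute_compl_autHom hV)
    (Subgroup.disjoint_zpowers_of_mul_self_eq_one (tokenGraph.compl_mul_self hV) hc_range)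
  rwa [hc_order] at this
end

section
/- Let G be a graph on n vertices, 1 ≤ k ≤ n−1, and u,v distinct vertices of G. Then u and v are adjacent in G if and only if there exist k-subsets A with u∈A, v∉A and B with v∈B, u∉B such that A and B are adjacent in F_k(G). Equivalently, u is not adjacent to v iff there are no edges of F_k(G) between κ(u,k)∖κ(v,k) and κ(v,k)∖κ(u,k), where κ(w,k) denotes the set of k-subsets of V(G) containing w. -/
/-! Moving the token on `u` to `v` along the edge `uv` is an edge of the token graph, and every
edge of the token graph moves one token along an edge of `G`; so `u` and `v` are adjacent exactly
when some edge of `F_k(G)` moves a token from `u` to `v`. -/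

open Finset

namespace Finset

variable {V : Type*} [DecidableEq V]

theorem card_insert_erase_of_mem_of_notMem {A : Finset V} {u v : V} (hu : u ∈ A) (hv : v ∉ A) :
    #(insert v (A.erase u)) = #A := by
  rw [card_insert_of_notMem fun h => hv (mem_of_mem_erase h), card_erase_add_one hu]

theorem symmDiff_insert_erase {A : Finset V} {u v : V} (hu : u ∈ A) (hv : v ∉ A) :
    symmDiff A (insert v (A.erase u)) = {u, v} := by
  ext x
  simp only [mem_symmDiff, mem_insert, mem_erase, mem_singleton]
  grind

theorem exists_card_eq_mem_notMem [Fintype V] {u v : V} (huv : u ≠ v) {k : ℕ} (hk1 : 1 ≤ k)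
    (hk2 : k ≤ Fintype.card V - 1) : ∃ A : Finset V, #A = k ∧ u ∈ A ∧ v ∉ A := by
  have hsub : {u} ⊆ univ.erase v := singleton_subset_iff.2 (mem_erase.2 ⟨huv, mem_univ u⟩)
  obtain ⟨A, huA, hAv, hA⟩ := exists_subsuperset_card_eq hsub (by simpa using hk1)
    (by rwa [card_erase_of_mem (mem_univ v), card_univ])
  exact ⟨A, hA, singleton_subset_iff.1 huA, fun hv => by simpa using hAv hv⟩

end Finset

section

variable {V : Type*} [DecidableEq V] {G : SimpleGraph V} {k : ℕ}

theorem tokenGraph_adj_insert_erase {A : {s : Finset V // s.card = k}} {u v : V}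
    (hu : u ∈ A.1) (hv : v ∉ A.1) (huv : G.Adj u v) :
    (tokenGraph G k).Adj A
      ⟨insert v (A.1.erase u), (card_insert_erase_of_mem_of_notMem hu hv).trans A.2⟩ :=
  ⟨u, v, huv, symmDiff_insert_erase hu hv⟩

theorem SimpleGraph.Adj.of_tokenGraph_adj {A B : {s : Finset V // s.card = k}} {u v : V}
    (hAB : (tokenGraph G k).Adj A B) (huA : u ∈ A.1) (huB : u ∉ B.1) (hvB : v ∈ B.1)
    (hvA : v ∉ A.1) : G.Adj u v := by
  obtain ⟨a, b, hab, hsd⟩ := hAB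
  have hu : u ∈ symmDiff A.1 B.1 := mem_symmDiff.2 (.inl ⟨huA, huB⟩)
  have hv : v ∈ symmDiff A.1 B.1 := mem_symmDiff.2 (.inr ⟨hvB, hvA⟩)
  rw [hsd, mem_insert, mem_singleton] at hu hv
  have huv : u ≠ v := ne_of_mem_of_not_mem huA hvA
  rcases hu with rfl | rfl <;> rcases hv with rfl | rfl
  all_goals first | exact absurd rfl huv | exact hab | exact hab.symm

end

/-- adjacency of u,v in G is characterized by the existence of an
edge of F_k(G) between a k-set containing u but not v and one containing v but
not u; equivalently non-adjacency means no such edges exist. -/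
theorem adjacency_iff_token_edge {V : Type*} [Fintype V] [DecidableEq V]
    (G : SimpleGraph V) (n k : ℕ)
    (hn : Fintype.card V = n) (hk1 : 1 ≤ k) (hk2 : k ≤ n - 1)
    (u v : V) (huv : u ≠ v) :
    (G.Adj u v ↔
      ∃ A B : {s : Finset V // s.card = k},
        u ∈ A.1 ∧ v ∉ A.1 ∧ v ∈ B.1 ∧ u ∉ B.1 ∧ (tokenGraph G k).Adj A B) ∧
    (¬ G.Adj u v ↔
      ∀ A B : {s : Finset V // s.card = k},
        u ∈ A.1 ∧ v ∉ A.1 → v ∈ B.1 ∧ u ∉ B.1 →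
          ¬ (tokenGraph G k).Adj A B) := by
  have key : G.Adj u v ↔
      ∃ A B : {s : Finset V // s.card = k},
        u ∈ A.1 ∧ v ∉ A.1 ∧ v ∈ B.1 ∧ u ∉ B.1 ∧ (tokenGraph G k).Adj A B := by
    refine ⟨fun hadj => ?_, fun ⟨A, B, huA, hvA, hvB, huB, hAB⟩ =>
      hAB.of_tokenGraph_adj huA huB hvB hvA⟩
    obtain ⟨A, hA, huA, hvA⟩ := exists_card_eq_mem_notMem huv hk1 (hn ▸ hk2)
    exact ⟨⟨A, hA⟩, _, huA, hvA, mem_insert_self v _, fun h => by simp [huv] at h,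
      tokenGraph_adj_insert_erase huA hvA hadj⟩
  refine ⟨key, ?_⟩
  rw [key]
  push Not
  exact ⟨fun h A B hA hB => h A B hA.1 hA.2 hB.1 hB.2,
    fun h A B huA hvA hvB huB => h A B ⟨huA, hvA⟩ ⟨hvB, huB⟩⟩
end

section
/- Let F be a graph on C(n,k) vertices with n even and k = n/2, and let 𝓡 be a k-reconstruction family of F. Then the family of complements 𝓡̄ := {V(F) ∖ X : X ∈ 𝓡} is also a k-reconstruction family of F. -/
open Finset

/-- `S_𝓡(A)`: the members of the family 𝓡 containing the vertex A. -/
def SR {α : Type*} [DecidableEq α] (R : Finset (Finset α)) (A : α) :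
    Finset (Finset α) :=
  R.filter (fun X => A ∈ X)

/-!
Double counting the incidences between vertices and members gives
`|𝓡| · C(2k-1, k-1) = C(2k, k) · k = 2k · C(2k-1, k-1)`, so `|𝓡| = 2k`.
Complementation maps `𝓡 \ S_𝓡(A)` bijectively onto `S_𝓡̄(A)`, hence `|S_𝓡̄(A)| = 2k - k = k`,
and for an edge `AB`, `|S_𝓡̄(A) ∩ S_𝓡̄(B)| = 2k - |S_𝓡(A) ∪ S_𝓡(B)| = 2k - (k + 1) = k - 1`.
Members of `𝓡̄` have size `C(2k, k) - C(2k-1, k-1) = C(2k-1, k-1)`.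
-/

namespace Nat

theorem choose_two_mul_mul_self (k : ℕ) :
    (2 * k).choose k * k = 2 * k * (2 * k - 1).choose (k - 1) := by
  rcases k with _ | j
  · simp
  · have h := add_one_mul_choose_eq (2 * j + 1) j
    rw [show 2 * j + 1 + 1 = 2 * (j + 1) by ring] at h
    simp only [show 2 * (j + 1) - 1 = 2 * j + 1 by omega, add_tsub_cancel_right]
    linarith

end Nat

section ReconstructionFamily

variable {α : Type*} [DecidableEq α] (R : Finset (Finset α))

theorem sum_card_SR [Fintype α] : ∑ A, #(SR R A) = ∑ X ∈ R, #X :=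
  calc ∑ A, #(SR R A) = ∑ A, #(R.bipartiteAbove (· ∈ ·) A) := rfl
    _ = ∑ X ∈ R, #(univ.bipartiteBelow (· ∈ ·) X) :=
      sum_card_bipartiteAbove_eq_sum_card_bipartiteBelow _
    _ = ∑ X ∈ R, #X := by simp only [bipartiteBelow, filter_univ_mem]

theorem card_mul_eq_card_mul_of_card_SR [Fintype α] {m k : ℕ} (hX : ∀ X ∈ R, #X = m)
    (hS : ∀ A, #(SR R A) = k) : #R * m = Fintype.card α * k := by
  rw [← smul_eq_mul, ← sum_const, ← sum_congr rfl hX, ← sum_card_SR]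
  simp [hS]

theorem SR_subset (A : α) : SR R A ⊆ R := filter_subset _ _

variable [Fintype α]

theorem SR_image_compl (A : α) :
    SR (R.image compl) A = (R \ SR R A).image compl := by
  rw [SR, filter_image, SR, ← filter_not]
  simp

theorem card_SR_image_compl (A : α) :
    #(SR (R.image compl) A) = #R - #(SR R A) := by
  rw [SR_image_compl, card_image_of_injective _ compl_injective,
    card_sdiff_of_subset (SR_subset R A)]

theorem card_SR_image_compl_inter (A B : α) :
    #(SR (R.image compl) A ∩ SR (R.image compl) B) = #R - #(SR R A ∪ SR R B) := by
  rw [SR_image_compl, SR_image_compl, ← image_inter _ _ compl_injective, ← sdiff_union_distrib,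
    card_image_of_injective _ compl_injective,
    card_sdiff_of_subset (union_subset (SR_subset R A) (SR_subset R B))]

end ReconstructionFamily

/-- if n is even, k = n/2 and 𝓡 is a k-reconstruction family of F,
then the family of complements {V(F) ∖ X : X ∈ 𝓡} is also a
k-reconstruction family of F. -/
theorem complement_reconstruction_family
    {α : Type*} [Fintype α] [DecidableEq α]
    (F : SimpleGraph α) (n k : ℕ) (hcard : Fintype.card α = n.choose k)
    (hk : n = 2 * k)
    (R : Finset (Finset α))
    (h1 : ∀ X ∈ R, X.card = (n - 1).choose (k - 1))
    (h2 : ∀ A : α, (SR R A).card = k)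
    (h3 : ∀ A B : α, F.Adj A B → ((SR R A) ∩ (SR R B)).card = k - 1) :
    (∀ X ∈ R.image (fun X => Xᶜ), X.card = (n - 1).choose (k - 1)) ∧
    (∀ A : α, (SR (R.image (fun X => Xᶜ)) A).card = k) ∧
    (∀ A B : α, F.Adj A B →
      ((SR (R.image (fun X => Xᶜ)) A) ∩ (SR (R.image (fun X => Xᶜ)) B)).card
        = k - 1) := by
  subst hk
  set m := (2 * k - 1).choose (k - 1)
  have hm : 0 < m := Nat.choose_pos (by omega)
  have hdouble : Fintype.card α * k = 2 * k * m := by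
    rw [hcard, Nat.choose_two_mul_mul_self]
  have hR : #R = 2 * k :=
    Nat.eq_of_mul_eq_mul_right hm (by rw [card_mul_eq_card_mul_of_card_SR R h1 h2, hdouble])
  refine ⟨?_, fun A => by rw [card_SR_image_compl, h2]; omega, fun A B hAB => ?_⟩
  · rintro _ hY
    obtain ⟨X, hX, rfl⟩ := mem_image.mp hY
    have hkpos : 0 < k := by have := card_pos.mpr ⟨X, hX⟩; omega
    have hN : Fintype.card α = 2 * m := Nat.eq_of_mul_eq_mul_right hkpos (by rw [hdouble]; ring)
    rw [card_compl, h1 X hX, hN]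
    omega
  · have hunion := card_union_add_card_inter (SR R A) (SR R B)
    rw [card_SR_image_compl_inter, hR]
    rw [h2, h2, h3 A B hAB] at hunion
    omega
end

section
/- Every induced 4-cycle (A,B,C,D) of a k-token graph F_k(G) with G a (C4, diamond)-free graph is generated by moving two tokens along two disjoint edges of G: there exist disjoint edges a₁b₁ and a₂b₂ of G and a (k−2)-subset S of V(G) disjoint from {a₁,b₁,a₂,b₂} such that {A,B,C,D} = {S∪{a₁,a₂}, S∪{b₁,a₂}, S∪{b₁,b₂}, S∪{a₁,b₂}} (up to rotation/reflection of the cycle). -/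
open Finset

/-- `G` contains an induced 4-cycle. -/
def HasInducedC4 {V : Type*} (G : SimpleGraph V) : Prop :=
  ∃ a b c d : V, a ≠ b ∧ a ≠ c ∧ a ≠ d ∧ b ≠ c ∧ b ≠ d ∧ c ≠ d ∧
    G.Adj a b ∧ G.Adj b c ∧ G.Adj c d ∧ G.Adj d a ∧ ¬G.Adj a c ∧ ¬G.Adj b d

/-- `G` contains an induced diamond (K₄ minus an edge). -/
def HasInducedDiamond {V : Type*} (G : SimpleGraph V) : Prop :=
  ∃ a b c d : V, a ≠ b ∧ a ≠ c ∧ a ≠ d ∧ b ≠ c ∧ b ≠ d ∧ c ≠ d ∧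
    G.Adj a b ∧ G.Adj a c ∧ G.Adj a d ∧ G.Adj b c ∧ G.Adj c d ∧ ¬G.Adj b d

/-- A graph is (C4,diamond)-free if it has no induced 4-cycle and no induced
diamond. -/
def C4DiamondFree {V : Type*} (G : SimpleGraph V) : Prop :=
  ¬HasInducedC4 G ∧ ¬HasInducedDiamond G

/-! Two k-sets `X`, `Y` with `X \ Y = {x}`, `Y \ X = {y}` that are not adjacent in `F_k(G)` have
at most one common neighbour: each common neighbour comes from a common neighbour `z` of `x` and
`y` in `G`, and two different choices `z`, `z'` would close a 4-cycle `x z y z'` with `x`, `y`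
non-adjacent, i.e. an induced `C₄` or diamond. Applied to both diagonals of the induced 4-cycle,
this forces `|A \ C| = |B \ D| = 2`; then opposite sides of the cycle move the same token, and the
cycle is the square spanned by two disjoint edges over `S = A ∩ C`. -/

open Finset

section

variable {V : Type*}

theorem C4DiamondFree.adj_of_cycle {G : SimpleGraph V} (hG : C4DiamondFree G) {a b c d : V}
    (hab : G.Adj a b) (hbc : G.Adj b c) (hcd : G.Adj c d) (hda : G.Adj d a)
    (hac : a ≠ c) (hbd : b ≠ d) : G.Adj a c := by
  by_contra hnac
  by_cases hbd' : G.Adj b d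
  · exact hG.2 ⟨b, a, d, c, hab.ne.symm, hbd, hbc.ne, hda.ne.symm, hac, hcd.ne.symm,
      hab.symm, hbd', hbc, hda.symm, hcd.symm, hnac⟩
  · exact hG.1 ⟨a, b, c, d, hab.ne, hac, hda.ne.symm, hbc.ne, hbd, hcd.ne,
      hab, hbc, hcd, hda, hnac, hbd'⟩

variable [DecidableEq V]

namespace Finset

theorem mem_sdiff_of_sdiff_eq_singleton {s t : Finset V} {a : V} (h : s \ t = {a}) :
    a ∈ s ∧ a ∉ t :=
  mem_sdiff.1 (h ▸ mem_singleton_self a)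

theorem eq_of_sdiff_eq_sdiff {X M N : Finset V} (h₁ : X \ M = X \ N) (h₂ : M \ X = N \ X) :
    M = N := by
  rw [← sdiff_union_inter M X, ← sdiff_union_inter N X, h₂, inter_comm, inter_comm N,
    ← sdiff_sdiff_self_left, h₁, sdiff_sdiff_self_left]

theorem sdiff_eq_pair_of_card_eq_two {A B C : Finset V} {a c : V} (h : #(A \ C) = 2)
    (hAB : A \ B = {a}) (hBC : B \ C = {c}) : A \ C = {a, c} :=
  eq_of_subset_of_card_le (by rw [insert_eq, ← hAB, ← hBC]; exact sdiff_triangle A B C)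
    (h ▸ card_le_two)

theorem sdiff_eq_singleton_middle_cases {X Y M : Finset V} {x y a b c d : V}
    (hXY : X \ Y = {x}) (hYX : Y \ X = {y}) (hXM : X \ M = {a}) (hMX : M \ X = {b})
    (hMY : M \ Y = {c}) (hYM : Y \ M = {d}) :
    (a = x ∧ c = b ∧ d = y) ∨ (d = a ∧ b = y ∧ c = x) := by
  simp only [Finset.ext_iff, mem_sdiff, mem_singleton] at *
  have := (hXY x).2 rfl
  have := (hYX y).2 rfl
  have := (hXM a).2 rfl
  have := (hMX b).2 rfl
  have := (hMY c).2 rfl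
  have := (hYM d).2 rfl
  grind

theorem sdiff_eq_sdiff_of_card_sdiff_eq_two {A B C D : Finset V} {a c f g : V}
    (hAC : #(A \ C) = 2) (hDB : #(D \ B) = 2) (hAB : A \ B = {a}) (hBC : B \ C = {c})
    (hDA : D \ A = {f}) (hDC : D \ C = {g}) : A \ B = D \ C := by
  have haC : a ∉ C :=
    (mem_sdiff.1 (sdiff_eq_pair_of_card_eq_two hAC hAB hBC ▸ mem_insert_self a {c})).2
  have haD : a ∈ D := (mem_sdiff.1
    (sdiff_eq_pair_of_card_eq_two hDB hDA hAB ▸ mem_insert_of_mem (mem_singleton_self a))).1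
  rw [hAB, hDC, (eq_singleton_iff_unique_mem.1 hDC).2 a (mem_sdiff.2 ⟨haD, haC⟩)]

theorem eq_inter_union_of_sdiff_eq_pair {A B C : Finset V} {a b c : V} (hac : a ≠ c)
    (hAC : A \ C = {a, c}) (hAB : A \ B = {a}) (hBA : B \ A = {b}) : B = A ∩ C ∪ {b, c} := by
  ext v
  simp only [Finset.ext_iff, mem_sdiff, mem_insert, mem_singleton, mem_union, mem_inter] at *
  have := (hAB a).2 rfl
  have := (hBA b).2 rfl
  grind

theorem eq_union_pairs_of_swap_square {A B C D : Finset V} {a b c d : V}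
    (hAC : #(A \ C) = 2) (hCA : #(C \ A) = 2) (hAB : A \ B = {a}) (hBA : B \ A = {b})
    (hBC : B \ C = {c}) (hCB : C \ B = {d}) (hAD : A \ D = {c}) (hDA : D \ A = {d}) :
    a ≠ c ∧ a ≠ d ∧ b ≠ c ∧ b ≠ d ∧ ∃ S : Finset V, #S = #A - 2 ∧
      a ∉ S ∧ b ∉ S ∧ c ∉ S ∧ d ∉ S ∧
      A = S ∪ {a, c} ∧ B = S ∪ {b, c} ∧ C = S ∪ {b, d} ∧ D = S ∪ {a, d} := by
  have hAC' := sdiff_eq_pair_of_card_eq_two hAC hAB hBC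
  have hCA' := sdiff_eq_pair_of_card_eq_two hCA hCB hBA
  have hac : a ≠ c := card_pair_eq_two_iff.1 (hAC' ▸ hAC)
  have hdb : d ≠ b := card_pair_eq_two_iff.1 (hCA' ▸ hCA)
  have hmemA := hAC'.symm.subset
  have hmemC := hCA'.symm.subset
  simp only [insert_subset_iff, singleton_subset_iff, mem_sdiff] at hmemA hmemC
  obtain ⟨⟨haA, haC⟩, hcA, hcC⟩ := hmemA
  obtain ⟨⟨hdC, hdA⟩, hbC, hbA⟩ := hmemC
  refine ⟨hac, ne_of_mem_of_not_mem haA hdA, (ne_of_mem_of_not_mem hcA hbA).symm, hdb.symm,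
    A ∩ C, ?_, fun h => haC (mem_inter.1 h).2, fun h => hbA (mem_inter.1 h).1,
    fun h => hcC (mem_inter.1 h).2, fun h => hdA (mem_inter.1 h).1, ?_, ?_, ?_, ?_⟩
  · have := card_inter_add_card_sdiff A C
    omega
  · rw [← hAC', union_comm, sdiff_union_inter]
  · exact eq_inter_union_of_sdiff_eq_pair hac hAC' hAB hBA
  · rw [inter_comm, pair_comm, ← hCA', union_comm, sdiff_union_inter]
  · rw [pair_comm, eq_inter_union_of_sdiff_eq_pair hac.symm (pair_comm a c ▸ hAC') hAD hDA]

end Finset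

theorem tokenGraph_adj_iff {G : SimpleGraph V} {k : ℕ} {A B : {s : Finset V // s.card = k}} :
    (tokenGraph G k).Adj A B ↔ ∃ a b, G.Adj a b ∧ A.1 \ B.1 = {a} ∧ B.1 \ A.1 = {b} := by
  constructor
  · rintro ⟨a, b, hab, h⟩
    rw [symmDiff_def, sup_eq_union] at h
    have hcard : #(A.1 \ B.1) = #(B.1 \ A.1) := card_sdiff_comm (A.2.trans B.2.symm)
    have hsum : #(A.1 \ B.1) + #(B.1 \ A.1) = 2 := by
      rw [← card_union_of_disjoint disjoint_sdiff_sdiff, h, card_pair hab.ne]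
    obtain ⟨p, hp⟩ := card_eq_one.1 (by omega : #(A.1 \ B.1) = 1)
    obtain ⟨q, hq⟩ := card_eq_one.1 (by omega : #(B.1 \ A.1) = 1)
    refine ⟨p, q, ?_, hp, hq⟩
    have hpq : p ≠ q := by
      rintro rfl
      exact (mem_sdiff_of_sdiff_eq_singleton hp).2 (mem_sdiff_of_sdiff_eq_singleton hq).1
    rw [hp, hq, ← insert_eq] at h
    have hpa : p ∈ ({a, b} : Finset V) := h ▸ mem_insert_self p {q}
    have hqb : q ∈ ({a, b} : Finset V) := h ▸ mem_insert_of_mem (mem_singleton_self q)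
    simp only [mem_insert, mem_singleton] at hpa hqb
    rcases hpa with rfl | rfl <;> rcases hqb with rfl | rfl
    exacts [absurd rfl hpq, hab, hab.symm, absurd rfl hpq]
  · rintro ⟨a, b, hab, hA, hB⟩
    exact ⟨a, b, hab, by rw [symmDiff_def, hA, hB]; rfl⟩

section TokenGraph

variable {G : SimpleGraph V} {k : ℕ} {A B C D : {s : Finset V // s.card = k}}

theorem tokenGraph.card_sdiff_le_two (hAB : (tokenGraph G k).Adj A B)
    (hBC : (tokenGraph G k).Adj B C) : #(A.1 \ C.1) ≤ 2 := by
  obtain ⟨a, -, -, hA, -⟩ := tokenGraph_adj_iff.1 hAB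
  obtain ⟨c, -, -, hB, -⟩ := tokenGraph_adj_iff.1 hBC
  calc #(A.1 \ C.1) ≤ #(A.1 \ B.1 ∪ B.1 \ C.1) := card_le_card (sdiff_triangle _ _ _)
    _ ≤ 2 := by rw [hA, hB]; exact card_le_two

theorem tokenGraph.exists_middle_of_sdiff_eq_singleton {x y : V}
    (hAC : A.1 \ C.1 = {x}) (hCA : C.1 \ A.1 = {y})
    (hAB : (tokenGraph G k).Adj A B) (hBC : (tokenGraph G k).Adj B C) :
    ∃ z, G.Adj x z ∧ G.Adj z y ∧
      (A.1 \ B.1 = {x} ∧ B.1 \ A.1 = {z} ∨ A.1 \ B.1 = {z} ∧ B.1 \ A.1 = {y}) := by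
  obtain ⟨a, b, hab, hAB, hBA⟩ := tokenGraph_adj_iff.1 hAB
  obtain ⟨c, d, hcd, hBC, hCB⟩ := tokenGraph_adj_iff.1 hBC
  rcases sdiff_eq_singleton_middle_cases hAC hCA hAB hBA hBC hCB with ⟨rfl, rfl, rfl⟩ | ⟨rfl, rfl, rfl⟩
  · exact ⟨c, hab, hcd, .inl ⟨hAB, hBA⟩⟩
  · exact ⟨d, hcd, hab, .inr ⟨hAB, hBA⟩⟩

theorem tokenGraph.sdiff_eq_sdiff_of_cycle (hAB : (tokenGraph G k).Adj A B)
    (hBC : (tokenGraph G k).Adj B C) (hCD : (tokenGraph G k).Adj C D)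
    (hDA : (tokenGraph G k).Adj D A) (hAC : #(A.1 \ C.1) = 2) (hBD : #(B.1 \ D.1) = 2) :
    A.1 \ B.1 = D.1 \ C.1 ∧ B.1 \ A.1 = C.1 \ D.1 := by
  obtain ⟨_, _, -, hab, hba⟩ := tokenGraph_adj_iff.1 hAB
  obtain ⟨_, _, -, hbc, hcb⟩ := tokenGraph_adj_iff.1 hBC
  obtain ⟨_, _, -, hcd, hdc⟩ := tokenGraph_adj_iff.1 hCD
  obtain ⟨_, _, -, hda, had⟩ := tokenGraph_adj_iff.1 hDA
  have hCA : #(C.1 \ A.1) = 2 := (card_sdiff_comm (A.2.trans C.2.symm)) ▸ hAC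
  have hDB : #(D.1 \ B.1) = 2 := (card_sdiff_comm (B.2.trans D.2.symm)) ▸ hBD
  exact ⟨sdiff_eq_sdiff_of_card_sdiff_eq_two hAC hDB hab hbc hda hdc,
    sdiff_eq_sdiff_of_card_sdiff_eq_two hBD hCA hba had hcb hcd⟩

theorem C4DiamondFree.eq_of_tokenGraph_adj (hG : C4DiamondFree G) (hAC : #(A.1 \ C.1) = 1)
    (hnAC : ¬(tokenGraph G k).Adj A C) (hAB : (tokenGraph G k).Adj A B)
    (hBC : (tokenGraph G k).Adj B C) (hAD : (tokenGraph G k).Adj A D)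
    (hDC : (tokenGraph G k).Adj D C) : B = D := by
  obtain ⟨x, hx⟩ := card_eq_one.1 hAC
  obtain ⟨y, hy⟩ := card_eq_one.1 ((card_sdiff_comm (A.2.trans C.2.symm)) ▸ hAC)
  have hxy : x ≠ y := by
    rintro rfl
    exact (mem_sdiff_of_sdiff_eq_singleton hy).2 (mem_sdiff_of_sdiff_eq_singleton hx).1
  obtain ⟨z, hxz, hzy, hB⟩ := tokenGraph.exists_middle_of_sdiff_eq_singleton hx hy hAB hBC
  obtain ⟨z', hxz', hz'y, hD⟩ := tokenGraph.exists_middle_of_sdiff_eq_singleton hx hy hAD hDC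
  obtain rfl : z = z' := by
    by_contra hzz
    exact hnAC (tokenGraph_adj_iff.2
      ⟨x, y, hG.adj_of_cycle hxz hzy hz'y.symm hxz'.symm hxy hzz, hx, hy⟩)
  apply Subtype.ext
  rcases hB with ⟨h₁, h₂⟩ | ⟨h₁, h₂⟩ <;> rcases hD with ⟨h₃, h₄⟩ | ⟨h₃, h₄⟩
  · exact eq_of_sdiff_eq_sdiff (h₁.trans h₃.symm) (h₂.trans h₄.symm)
  · exact absurd (mem_sdiff_of_sdiff_eq_singleton h₃).1 (mem_sdiff_of_sdiff_eq_singleton h₂).2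
  · exact absurd (mem_sdiff_of_sdiff_eq_singleton h₁).1 (mem_sdiff_of_sdiff_eq_singleton h₄).2
  · exact eq_of_sdiff_eq_sdiff (h₁.trans h₃.symm) (h₂.trans h₄.symm)

theorem C4DiamondFree.card_sdiff_eq_two_of_tokenGraph (hG : C4DiamondFree G)
    (hAB : (tokenGraph G k).Adj A B) (hBC : (tokenGraph G k).Adj B C)
    (hAD : (tokenGraph G k).Adj A D) (hDC : (tokenGraph G k).Adj D C)
    (hnAC : ¬(tokenGraph G k).Adj A C) (hAC : A ≠ C) (hBD : B ≠ D) : #(A.1 \ C.1) = 2 := by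
  have h₀ : #(A.1 \ C.1) ≠ 0 := fun h => hAC <| Subtype.ext <|
    eq_of_subset_of_card_le (sdiff_eq_empty_iff_subset.1 (card_eq_zero.1 h)) (A.2.trans C.2.symm).ge
  have h₁ : #(A.1 \ C.1) ≠ 1 := fun h => hBD (hG.eq_of_tokenGraph_adj h hnAC hAB hBC hAD hDC)
  have := tokenGraph.card_sdiff_le_two hAB hBC
  omega

end TokenGraph

end

theorem induced_four_cycle_structure_general {V : Type*} [DecidableEq V]
    (G : SimpleGraph V) (hG : C4DiamondFree G) (k : ℕ)
    (A B C D : {s : Finset V // s.card = k})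
    (hAB : (tokenGraph G k).Adj A B) (hBC : (tokenGraph G k).Adj B C)
    (hCD : (tokenGraph G k).Adj C D) (hDA : (tokenGraph G k).Adj D A)
    (hAC : ¬(tokenGraph G k).Adj A C) (hBD : ¬(tokenGraph G k).Adj B D)
    (hne : A ≠ C ∧ B ≠ D) :
    ∃ a₁ b₁ a₂ b₂ : V, G.Adj a₁ b₁ ∧ G.Adj a₂ b₂ ∧
      a₁ ≠ a₂ ∧ a₁ ≠ b₂ ∧ b₁ ≠ a₂ ∧ b₁ ≠ b₂ ∧
      ∃ S : Finset V, S.card = k - 2 ∧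
        a₁ ∉ S ∧ b₁ ∉ S ∧ a₂ ∉ S ∧ b₂ ∉ S ∧
        ({A.1, B.1, C.1, D.1} : Set (Finset V)) =
          {S ∪ {a₁, a₂}, S ∪ {b₁, a₂}, S ∪ {b₁, b₂}, S ∪ {a₁, b₂}} := by
  have hAC₂ := hG.card_sdiff_eq_two_of_tokenGraph hAB hBC hDA.symm hCD.symm hAC hne.1 hne.2
  have hCA₂ : #(C.1 \ A.1) = 2 := (card_sdiff_comm (A.2.trans C.2.symm)) ▸ hAC₂
  have hDB₂ := hG.card_sdiff_eq_two_of_tokenGraph hDA hAB hCD.symm hBC.symm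
    (fun h => hBD h.symm) hne.2.symm hne.1
  obtain ⟨hAD, hDA⟩ :=
    tokenGraph.sdiff_eq_sdiff_of_cycle hDA.symm hCD.symm hBC.symm hAB.symm hAC₂ hDB₂
  obtain ⟨a, b, hab, hAB', hBA'⟩ := tokenGraph_adj_iff.1 hAB
  obtain ⟨c, d, hcd, hBC', hCB'⟩ := tokenGraph_adj_iff.1 hBC
  obtain ⟨hac, had, hbc, hbd, S, hS, haS, hbS, hcS, hdS, hA, hB, hC, hD⟩ :=
    eq_union_pairs_of_swap_square hAC₂ hCA₂ hAB' hBA' hBC' hCB' (hAD.trans hBC') (hDA.trans hCB')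
  exact ⟨a, b, c, d, hab, hcd, hac, had, hbc, hbd, S, A.2 ▸ hS, haS, hbS, hcS, hdS,
    by rw [hA, hB, hC, hD]⟩

/-- every induced 4-cycle of the k-token graph of a
(C4,diamond)-free graph G comes from moving two tokens along two disjoint edges
of G. -/
theorem induced_four_cycle_structure {V : Type*} [Fintype V] [DecidableEq V]
    (G : SimpleGraph V) (hG : C4DiamondFree G) (n k : ℕ)
    (hn : Fintype.card V = n) (hk1 : 1 ≤ k) (hk2 : k ≤ n - 1)
    (A B C D : {s : Finset V // s.card = k})
    (hAB : (tokenGraph G k).Adj A B) (hBC : (tokenGraph G k).Adj B C)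
    (hCD : (tokenGraph G k).Adj C D) (hDA : (tokenGraph G k).Adj D A)
    (hAC : ¬(tokenGraph G k).Adj A C) (hBD : ¬(tokenGraph G k).Adj B D)
    (hne : A ≠ C ∧ B ≠ D) :
    ∃ a₁ b₁ a₂ b₂ : V, G.Adj a₁ b₁ ∧ G.Adj a₂ b₂ ∧
      a₁ ≠ a₂ ∧ a₁ ≠ b₂ ∧ b₁ ≠ a₂ ∧ b₁ ≠ b₂ ∧
      ∃ S : Finset V, S.card = k - 2 ∧
        a₁ ∉ S ∧ b₁ ∉ S ∧ a₂ ∉ S ∧ b₂ ∉ S ∧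
        ({A.1, B.1, C.1, D.1} : Set (Finset V)) =
          {S ∪ {a₁, a₂}, S ∪ {b₁, a₂}, S ∪ {b₁, b₂}, S ∪ {a₁, b₂}} :=
  induced_four_cycle_structure_general G hG k A B C D hAB hBC hCD hDA hAC hBD hne
end

section
/- Let G be a (C4,diamond)-free graph. For each induced 4-cycle ABCD of F_k(G) and each vertex X of F_k(G) outside {A,B,C,D}, if X is adjacent to two non-consecutive vertices of the cycle ABCD, then X is adjacent to all four of A, B, C, D. -/
open Finset

/-!
Let `B`, `D` be the nonadjacent common neighbours of `A` and `C` in `F_k(G)`. Since `A ≠ C` and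
`A ∆ C` is the symmetric difference of the pairs `A ∆ B` and `B ∆ C`, it has two or four elements.

If `A ∆ C = {u, v}` with `u ∈ A` and `uv ∉ E(G)`, a common neighbour of `A` and `C` trades `u` for
some `w`, or `w` for `v`, where `w` is adjacent to both `u` and `v`; different common neighbours
give different `w`. Two of them would form a 4-cycle `u w₁ v w₂` without the chord `uv`, but in a
(C4, diamond)-free graph every 4-cycle has both chords.

If `A ∆ C = {a, b, c, d}` with `a, c ∈ A`, a common neighbour trades one of `a, c` for one of
`b, d`, and the complementary trade must also be an edge. `B` and `D` use complementary trades,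
so `X` uses one of the remaining two; then `ab, bc, cd, da` are all edges, the chords `ac`, `bd`
are forced, and they make `X` adjacent to `B` and to `D`.
-/
open scoped symmDiff

theorem symmDiff_symmDiff_symmDiff_cancel_left {α : Type*} [GeneralizedBooleanAlgebra α]
    (a b c : α) : a ∆ b ∆ (a ∆ c) = b ∆ c := by
  rw [symmDiff_symmDiff_symmDiff_comm, symmDiff_self, bot_symmDiff]

namespace Finset

variable {α : Type*} [DecidableEq α]

theorem card_symmDiff_add_two_mul_card_inter (s t : Finset α) :
    #(s ∆ t) + 2 * #(s ∩ t) = #s + #t := by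
  rw [Finset.symmDiff_def, card_union_of_disjoint disjoint_sdiff_sdiff]
  have hs := card_sdiff_add_card_inter s t
  have ht := card_sdiff_add_card_inter t s
  rw [inter_comm t s] at ht
  omega

theorem pair_symmDiff_pair_same_left {a b c : α} (hab : a ≠ b) (hac : a ≠ c) (hbc : b ≠ c) :
    ({a, b} : Finset α) ∆ {a, c} = {b, c} := by
  ext z
  simp only [mem_symmDiff, mem_insert, mem_singleton]
  grind

theorem eq_of_symmDiff_subset_of_card_eq {s t : Finset α} (hst : #s = #t) (h : s ∆ t ⊆ s) :
    s = t := by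
  refine eq_of_subset_of_card_le (fun z hz => ?_) hst.le |>.symm
  by_contra hzs
  exact hzs (h (mem_symmDiff.2 (Or.inr ⟨hz, hzs⟩)))

theorem mem_iff_notMem_of_symmDiff_eq_pair {s t : Finset α} (hst : #s = #t) {a b : α}
    (h : s ∆ t = {a, b}) : a ∈ s ↔ b ∉ s := by
  have hne : s ≠ t := by rw [← symmDiff_nonempty, h]; simp
  have ha : a ∈ s ∆ t := by simp [h]
  have hb : b ∈ s ∆ t := by simp [h]
  rw [mem_symmDiff] at ha hb
  constructor
  · intro has hbs
    exact hne (eq_of_symmDiff_subset_of_card_eq hst (h ▸ insert_subset has (by simpa)))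
  · intro hbs
    by_contra has
    refine hne (eq_of_symmDiff_subset_of_card_eq hst.symm ?_).symm
    rw [symmDiff_comm, h]
    exact insert_subset (by tauto) (by simp; tauto)

theorem card_symmDiff_eq_two_or_disjoint {s t u : Finset α} {a b c d : α} (hab : a ≠ b)
    (hcd : c ≠ d) (hst : s ∆ t = {a, b}) (htu : t ∆ u = {c, d}) (hsu : s ≠ u) :
    #(s ∆ u) = 2 ∨ Disjoint ({a, b} : Finset α) {c, d} := by
  have hsu' : s ∆ u = {a, b} ∆ {c, d} := by
    rw [← hst, ← htu, symmDiff_comm s t, symmDiff_symmDiff_symmDiff_cancel_left]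
  have hcount := card_symmDiff_add_two_mul_card_inter ({a, b} : Finset α) {c, d}
  rw [← hsu', card_pair hab, card_pair hcd] at hcount
  have hsu₀ : #(s ∆ u) ≠ 0 := by simpa [symmDiff_eq_empty] using hsu
  rw [disjoint_iff_inter_eq_empty, ← card_eq_zero]
  omega

theorem symmDiff_eq_of_disjoint {s t u : Finset α} {a b c d : α} (hst : s ∆ t = {a, b})
    (htu : t ∆ u = {c, d}) (hc : c ∈ t) (hd : d ∉ t)
    (hdisj : Disjoint ({a, b} : Finset α) {c, d}) :
    c ∈ s ∧ d ∉ s ∧ a ≠ c ∧ b ≠ d ∧ s ∆ u = {a, b, c, d} := by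
  have hc' : c ∉ s ∆ t := hst ▸ disjoint_right.1 hdisj (mem_insert_self c _)
  have hd' : d ∉ s ∆ t :=
    hst ▸ disjoint_right.1 hdisj (mem_insert_of_mem (mem_singleton_self d))
  rw [mem_symmDiff] at hc' hd'
  refine ⟨by tauto, by tauto, ?_, ?_, ?_⟩
  · rintro rfl
    exact disjoint_left.1 hdisj (mem_insert_self a _) (mem_insert_self a _)
  · rintro rfl
    exact disjoint_left.1 hdisj (mem_insert_of_mem (mem_singleton_self b))
      (mem_insert_of_mem (mem_singleton_self b))
  · rw [← symmDiff_symmDiff_symmDiff_cancel_left t, symmDiff_comm t s, hst, htu,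
      symmDiff_eq_union hdisj, insert_union, singleton_union]

end Finset

theorem C4DiamondFree.adj_diagonals_of_cycle {V : Type*} {G : SimpleGraph V}
    (hG : C4DiamondFree G) {a b c d : V}
    (hab : G.Adj a b) (hbc : G.Adj b c) (hcd : G.Adj c d) (hda : G.Adj d a)
    (hac : a ≠ c) (hbd : b ≠ d) : G.Adj a c ∧ G.Adj b d := by
  by_cases h₁ : G.Adj a c <;> by_cases h₂ : G.Adj b d
  · exact ⟨h₁, h₂⟩
  · exact hG.2.elim ⟨a, b, c, d, hab.ne, hac, hda.ne.symm, hbc.ne, hbd, hcd.ne,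
      hab, h₁, hda.symm, hbc, hcd, h₂⟩
  · exact hG.2.elim ⟨b, a, d, c, hab.ne.symm, hbd, hbc.ne, hda.ne.symm, hac, hcd.ne.symm,
      hab.symm, h₂, hbc, hda.symm, hcd.symm, h₁⟩
  · exact hG.1.elim ⟨a, b, c, d, hab.ne, hac, hda.ne.symm, hbc.ne, hbd, hcd.ne,
      hab, hbc, hcd, hda, h₁, h₂⟩

namespace tokenGraph

variable {V : Type*} [DecidableEq V] {G : SimpleGraph V} {k : ℕ}
  {A B C Y : {s : Finset V // s.card = k}}

theorem exists_adj_mem_notMem_of_adj (h : (tokenGraph G k).Adj A B) :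
    ∃ a b, G.Adj a b ∧ a ∈ A.1 ∧ b ∉ A.1 ∧ A.1 ∆ B.1 = {a, b} := by
  obtain ⟨a, b, hab, hs⟩ := h
  have hcard : #A.1 = #B.1 := A.2.trans B.2.symm
  by_cases ha : a ∈ A.1
  · exact ⟨a, b, hab, ha, (mem_iff_notMem_of_symmDiff_eq_pair hcard hs).1 ha, hs⟩
  · rw [pair_comm] at hs
    exact ⟨b, a, hab.symm, (mem_iff_notMem_of_symmDiff_eq_pair hcard hs).2 ha, ha, hs⟩

theorem adj_of_mem_symmDiff (h : (tokenGraph G k).Adj A B) {x y : V} (hx : x ∈ A.1 ∆ B.1)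
    (hy : y ∈ A.1 ∆ B.1) (hxy : x ≠ y) : G.Adj x y := by
  obtain ⟨a, b, hab, hs⟩ := h
  rw [hs, mem_insert, mem_singleton] at hx hy
  rcases hx with rfl | rfl <;> rcases hy with rfl | rfl
  exacts [absurd rfl hxy, hab, hab.symm, absurd rfl hxy]

theorem card_symmDiff_of_adj (h : (tokenGraph G k).Adj A B) : #(A.1 ∆ B.1) = 2 := by
  obtain ⟨a, b, hab, hs⟩ := h
  rw [hs, card_pair hab.ne]

theorem adj_of_symmDiff_eq_pair_of_symmDiff_eq_pair {x y z : V} (hxy : G.Adj x y)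
    (hzx : z ≠ x) (hzy : z ≠ y) (hB : A.1 ∆ B.1 = {z, x}) (hC : A.1 ∆ C.1 = {z, y}) :
    (tokenGraph G k).Adj B C :=
  ⟨x, y, hxy, by rw [← symmDiff_symmDiff_symmDiff_cancel_left A.1, hB, hC,
    pair_symmDiff_pair_same_left hzx hzy hxy.ne]⟩

theorem exists_common_adj_of_symmDiff_eq_pair {u v : V} (hu : u ∈ A.1) (hv : v ∉ A.1)
    (huv : ¬G.Adj u v) (hAC : A.1 ∆ C.1 = {u, v})
    (hAY : (tokenGraph G k).Adj A Y) (hYC : (tokenGraph G k).Adj Y C) :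
    ∃ w, G.Adj u w ∧ G.Adj w v ∧
      (w ∉ A.1 ∧ A.1 ∆ Y.1 = {u, w} ∨ w ∈ A.1 ∧ A.1 ∆ Y.1 = {w, v}) := by
  obtain ⟨p, x, hpx, hp, hx, hAY⟩ := exists_adj_mem_notMem_of_adj hAY
  have hYC' : Y.1 ∆ C.1 = {p, x} ∆ {u, v} := by
    rw [← hAY, ← hAC, symmDiff_symmDiff_symmDiff_cancel_left]
  have hpv : p ≠ v := ne_of_mem_of_not_mem hp hv
  have hxu : x ≠ u := (ne_of_mem_of_not_mem hu hx).symm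
  by_cases hpu : p = u <;> by_cases hxv : x = v
  · subst hpu hxv
    exact absurd hpx huv
  · subst hpu
    refine ⟨x, hpx, adj_of_mem_symmDiff hYC ?_ ?_ hxv, Or.inl ⟨hx, hAY⟩⟩ <;>
      simp [hYC', mem_symmDiff, hxu, hxv, Ne.symm hxv, hpv.symm]
  · subst hxv
    refine ⟨p, adj_of_mem_symmDiff hYC ?_ ?_ (Ne.symm hpu), hpx, Or.inr ⟨hp, hAY⟩⟩ <;>
      simp [hYC', mem_symmDiff, hpu, hpv, Ne.symm hpu, hxu.symm]
  · refine absurd (card_symmDiff_of_adj hYC) (two_lt_card.2 ⟨p, ?_, x, ?_, u, ?_,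
      hpx.ne, hpu, hxu⟩).ne' <;>
      simp [hYC', mem_symmDiff, hpu, hpv, hxu, hxv, Ne.symm hpu, hxu.symm]

end tokenGraph

namespace C4DiamondFree

open tokenGraph

variable {V : Type*} [DecidableEq V] {G : SimpleGraph V} {k : ℕ}
  {A B C D X Y : {s : Finset V // s.card = k}}

theorem tokenGraph_eq_of_card_symmDiff_eq_two (hG : C4DiamondFree G)
    (hAC : ¬(tokenGraph G k).Adj A C) (hcard : #(A.1 ∆ C.1) = 2)
    (hAB : (tokenGraph G k).Adj A B) (hBC : (tokenGraph G k).Adj B C)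
    (hAD : (tokenGraph G k).Adj A D) (hDC : (tokenGraph G k).Adj D C) : B = D := by
  obtain ⟨u, v, huv, hs⟩ := card_eq_two.1 hcard
  have horient := mem_iff_notMem_of_symmDiff_eq_pair (A.2.trans C.2.symm) hs
  wlog hu : u ∈ A.1 generalizing u v
  · rw [pair_comm] at hs
    exact this v u huv.symm hs (mem_iff_notMem_of_symmDiff_eq_pair (A.2.trans C.2.symm) hs)
      (by tauto)
  have huv' : ¬G.Adj u v := fun h => hAC ⟨u, v, h, hs⟩
  obtain ⟨w₁, huw₁, hw₁v, hB⟩ :=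
    exists_common_adj_of_symmDiff_eq_pair hu (horient.1 hu) huv' hs hAB hBC
  obtain ⟨w₂, huw₂, hw₂v, hD⟩ :=
    exists_common_adj_of_symmDiff_eq_pair hu (horient.1 hu) huv' hs hAD hDC
  by_cases hw : w₁ = w₂
  · subst hw
    refine Subtype.ext (symmDiff_right_injective A.1 ?_)
    rcases hB with ⟨h₁, hB⟩ | ⟨h₁, hB⟩ <;>
      rcases hD with ⟨h₂, hD⟩ | ⟨h₂, hD⟩
    exacts [hB.trans hD.symm, absurd h₂ h₁, absurd h₁ h₂, hB.trans hD.symm]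
  · exact absurd (hG.adj_diagonals_of_cycle huw₁ hw₁v hw₂v.symm huw₂.symm huv hw).1 huv'

theorem tokenGraph_symmDiff_eq_of_adj_of_adj (hG : C4DiamondFree G) {a b c d : V}
    (ha : a ∈ A.1) (hb : b ∉ A.1) (hc : c ∈ A.1) (hd : d ∉ A.1)
    (hac : a ≠ c) (hbd : b ≠ d)
    (hab : G.Adj a b) (hcd : G.Adj c d) (hAC : A.1 ∆ C.1 = {a, b, c, d})
    (hAY : (tokenGraph G k).Adj A Y) (hYC : (tokenGraph G k).Adj Y C) :
    A.1 ∆ Y.1 = {a, b} ∨ A.1 ∆ Y.1 = {c, d} ∨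
      ((A.1 ∆ Y.1 = {a, d} ∨ A.1 ∆ Y.1 = {c, b}) ∧ G.Adj a c ∧ G.Adj b d) := by
  have had := ne_of_mem_of_not_mem ha hd
  have hcb := ne_of_mem_of_not_mem hc hb
  obtain ⟨p, x, hpx, hp, hx, hAY⟩ := exists_adj_mem_notMem_of_adj hAY
  have hYC' : Y.1 ∆ C.1 = {p, x} ∆ {a, b, c, d} := by
    rw [← hAY, ← hAC, symmDiff_symmDiff_symmDiff_cancel_left]
  have hsub : {p, x} ⊆ ({a, b, c, d} : Finset V) := by
    have hcount := card_symmDiff_add_two_mul_card_inter {p, x} {a, b, c, d}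
    have h4 : #({a, b, c, d} : Finset V) = 4 := by
      rw [card_insert_of_notMem (by simp [hab.ne, hac, had]),
        card_insert_of_notMem (by simp [hcb.symm, hbd]), card_pair hcd.ne]
    rw [← hYC', card_symmDiff_of_adj hYC, card_pair hpx.ne, h4] at hcount
    rw [← inter_eq_left]
    exact eq_of_subset_of_card_le inter_subset_left (by rw [card_pair hpx.ne]; omega)
  have hp' : p = a ∨ p = c := by
    have := hsub (mem_insert_self p {x})
    simp only [mem_insert, mem_singleton] at this
    rcases this with h | h | h | h
    exacts [Or.inl h, absurd (h ▸ hp) hb, Or.inr h, absurd (h ▸ hp) hd]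
  have hx' : x = b ∨ x = d := by
    have := hsub (mem_insert_of_mem (mem_singleton_self x))
    simp only [mem_insert, mem_singleton] at this
    rcases this with h | h | h | h
    exacts [absurd (h ▸ ha) hx, Or.inl h, absurd (h ▸ hc) hx, Or.inr h]
  rcases hp' with rfl | rfl <;> rcases hx' with rfl | rfl
  · exact Or.inl hAY
  · have hbc : G.Adj b c := adj_of_mem_symmDiff hYC
      (by simp [hYC', mem_symmDiff, hab.ne.symm, hbd, hcb.symm])
      (by simp [hYC', mem_symmDiff, hac.symm, hcd.ne]) hcb.symm
    exact Or.inr (Or.inr ⟨Or.inl hAY, hG.adj_diagonals_of_cycle hab hbc hcd hpx.symm hac hbd⟩)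
  · have had' : G.Adj a d := adj_of_mem_symmDiff hYC
      (by simp [hYC', mem_symmDiff, hac, hab.ne])
      (by simp [hYC', mem_symmDiff, hcd.ne.symm, hbd.symm]) had
    exact Or.inr (Or.inr
      ⟨Or.inr hAY, hG.adj_diagonals_of_cycle hab hpx.symm hcd had'.symm hac hbd⟩)
  · exact Or.inr (Or.inl hAY)
theorem tokenGraph_adj_of_adj_of_adj (hG : C4DiamondFree G)
    (hAB : (tokenGraph G k).Adj A B) (hBC : (tokenGraph G k).Adj B C)
    (hAD : (tokenGraph G k).Adj A D) (hDC : (tokenGraph G k).Adj D C)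
    (hAX : (tokenGraph G k).Adj A X) (hXC : (tokenGraph G k).Adj X C)
    (hAC : ¬(tokenGraph G k).Adj A C) (hBD : ¬(tokenGraph G k).Adj B D)
    (hAC' : A ≠ C) (hBD' : B ≠ D) (hXB : X ≠ B) (hXD : X ≠ D) :
    (tokenGraph G k).Adj X B ∧ (tokenGraph G k).Adj X D := by
  obtain ⟨a, b, hab, ha, hb, hsAB⟩ := exists_adj_mem_notMem_of_adj hAB
  obtain ⟨c, d, hcd, hc, hd, hsBC⟩ := exists_adj_mem_notMem_of_adj hBC
  obtain h₂ | hdisj := card_symmDiff_eq_two_or_disjoint hab.ne hcd.ne hsAB hsBC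
    (fun h => hAC' (Subtype.ext h))
  · exact absurd (hG.tokenGraph_eq_of_card_symmDiff_eq_two hAC h₂ hAB hBC hAD hDC) hBD'
  obtain ⟨hcA, hdA, hac, hbd, hsAC⟩ := symmDiff_eq_of_disjoint hsAB hsBC hc hd hdisj
  have hba : b ≠ a := (ne_of_mem_of_not_mem ha hb).symm
  have hda : d ≠ a := (ne_of_mem_of_not_mem ha hdA).symm
  have hbc : b ≠ c := (ne_of_mem_of_not_mem hcA hb).symm
  have hdc : d ≠ c := (ne_of_mem_of_not_mem hcA hdA).symm
  have hsAD : A.1 ∆ D.1 = {c, d} := by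
    rcases hG.tokenGraph_symmDiff_eq_of_adj_of_adj ha hb hcA hdA hac hbd hab hcd hsAC hAD hDC
      with h | h | ⟨h | h, hGac, hGbd⟩
    · exact absurd (Subtype.ext (symmDiff_right_injective A.1 (hsAB.trans h.symm))) hBD'
    · exact h
    · exact absurd (adj_of_symmDiff_eq_pair_of_symmDiff_eq_pair hGbd hba.symm hda.symm hsAB h) hBD
    · rw [pair_comm] at hsAB h
      exact absurd (adj_of_symmDiff_eq_pair_of_symmDiff_eq_pair hGac hba hbc hsAB h) hBD
  rcases hG.tokenGraph_symmDiff_eq_of_adj_of_adj ha hb hcA hdA hac hbd hab hcd hsAC hAX hXC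
    with h | h | ⟨h | h, hGac, hGbd⟩
  · exact absurd (Subtype.ext (symmDiff_right_injective A.1 (h.trans hsAB.symm))) hXB
  · exact absurd (Subtype.ext (symmDiff_right_injective A.1 (h.trans hsAD.symm))) hXD
  · refine ⟨adj_of_symmDiff_eq_pair_of_symmDiff_eq_pair hGbd.symm hda.symm hba.symm h hsAB, ?_⟩
    rw [pair_comm] at h hsAD
    exact adj_of_symmDiff_eq_pair_of_symmDiff_eq_pair hGac hda hdc h hsAD
  · refine ⟨?_, adj_of_symmDiff_eq_pair_of_symmDiff_eq_pair hGbd hbc.symm hdc.symm h hsAD⟩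
    rw [pair_comm] at h hsAB
    exact adj_of_symmDiff_eq_pair_of_symmDiff_eq_pair hGac.symm hbc hba h hsAB

end C4DiamondFree

theorem adjacent_to_opposite_implies_all_general {V : Type*} [DecidableEq V]
    (G : SimpleGraph V) (hG : C4DiamondFree G) (k : ℕ)
    (A B C D X : {s : Finset V // s.card = k})
    (hAB : (tokenGraph G k).Adj A B) (hBC : (tokenGraph G k).Adj B C)
    (hCD : (tokenGraph G k).Adj C D) (hDA : (tokenGraph G k).Adj D A)
    (hAC : ¬(tokenGraph G k).Adj A C) (hBD : ¬(tokenGraph G k).Adj B D)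
    (hne : A ≠ C ∧ B ≠ D)
    (hX : X ≠ A ∧ X ≠ B ∧ X ≠ C ∧ X ≠ D)
    (hadj : ((tokenGraph G k).Adj X A ∧ (tokenGraph G k).Adj X C) ∨
            ((tokenGraph G k).Adj X B ∧ (tokenGraph G k).Adj X D)) :
    (tokenGraph G k).Adj X A ∧ (tokenGraph G k).Adj X B ∧
    (tokenGraph G k).Adj X C ∧ (tokenGraph G k).Adj X D := by
  obtain ⟨hAC', hBD'⟩ := hne
  obtain ⟨hXA, hXB, hXC, hXD⟩ := hX
  rcases hadj with ⟨hXA', hXC'⟩ | ⟨hXB', hXD'⟩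
  · obtain ⟨hXB', hXD'⟩ := hG.tokenGraph_adj_of_adj_of_adj hAB hBC hDA.symm hCD.symm
      hXA'.symm hXC' hAC hBD hAC' hBD' hXB hXD
    exact ⟨hXA', hXB', hXC', hXD'⟩
  · obtain ⟨hXC', hXA'⟩ := hG.tokenGraph_adj_of_adj_of_adj hBC hCD hAB.symm hDA.symm
      hXB'.symm hXD' hBD (fun h => hAC h.symm) hBD' hAC'.symm hXC hXA
    exact ⟨hXA', hXB', hXC', hXD'⟩

/-- property (P1): if G is (C4,diamond)-free, ABCD an induced
4-cycle of F_k(G) and X a further vertex adjacent to two non-consecutive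
vertices of the cycle, then X is adjacent to all of A, B, C, D. -/
theorem adjacent_to_opposite_implies_all {V : Type*} [Fintype V] [DecidableEq V]
    (G : SimpleGraph V) (hG : C4DiamondFree G) (n k : ℕ)
    (hn : Fintype.card V = n) (hk1 : 1 ≤ k) (hk2 : k ≤ n - 1)
    (A B C D X : {s : Finset V // s.card = k})
    (hAB : (tokenGraph G k).Adj A B) (hBC : (tokenGraph G k).Adj B C)
    (hCD : (tokenGraph G k).Adj C D) (hDA : (tokenGraph G k).Adj D A)
    (hAC : ¬(tokenGraph G k).Adj A C) (hBD : ¬(tokenGraph G k).Adj B D)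
    (hne : A ≠ C ∧ B ≠ D)
    (hX : X ≠ A ∧ X ≠ B ∧ X ≠ C ∧ X ≠ D)
    (hadj : ((tokenGraph G k).Adj X A ∧ (tokenGraph G k).Adj X C) ∨
            ((tokenGraph G k).Adj X B ∧ (tokenGraph G k).Adj X D)) :
    (tokenGraph G k).Adj X A ∧ (tokenGraph G k).Adj X B ∧
    (tokenGraph G k).Adj X C ∧ (tokenGraph G k).Adj X D :=
  adjacent_to_opposite_implies_all_general G hG k A B C D X hAB hBC hCD hDA hAC hBD hne hX hadj
end

section
/- Let G be a (C4,diamond)-free graph and e = ab an edge of G such that G ∖ {a,b} is connected. Then any two edges of F_k(G) corresponding to moving a token along e (i.e., edges A₁B₁ and A₂B₂ with A₁ △ B₁ = A₂ △ B₂ = {a,b}) are connected by a ladder in F_k(G). -/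
open Finset

/-- `u, v : Fin (m+1) → α` are the vertices of an induced ladder `K₂ □ P_m`
in `F`: the `u i` form one side, the `v i` the other, the rungs are the edges
`u i -- v i`, and there are no further adjacencies or coincidences. -/
def IsLadder {α : Type*} (F : SimpleGraph α) (m : ℕ)
    (u v : Fin (m + 1) → α) : Prop :=
  Function.Injective u ∧ Function.Injective v ∧ (∀ i j, u i ≠ v j) ∧
  (∀ i j : Fin (m + 1),
    F.Adj (u i) (u j) ↔ ((i : ℕ) + 1 = j ∨ (j : ℕ) + 1 = i)) ∧
  (∀ i j : Fin (m + 1),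
    F.Adj (v i) (v j) ↔ ((i : ℕ) + 1 = j ∨ (j : ℕ) + 1 = i)) ∧
  (∀ i j : Fin (m + 1), F.Adj (u i) (v j) ↔ i = j)

/-- The edges `ab` and `a'b'` of `F` are connected by a ladder: either they are
equal (as unordered pairs), or there is an induced ladder in `F` having them as
its two end rungs. -/
def ConnectedByLadder {α : Type*} (F : SimpleGraph α) (a b a' b' : α) : Prop :=
  ({a, b} : Set α) = {a', b'} ∨
  ∃ (m : ℕ) (u v : Fin (m + 1) → α), 1 ≤ m ∧ IsLadder F m u v ∧
    ((u 0 = a ∧ v 0 = b) ∨ (u 0 = b ∧ v 0 = a)) ∧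
    ((u (Fin.last m) = a' ∧ v (Fin.last m) = b') ∨
      (u (Fin.last m) = b' ∧ v (Fin.last m) = a'))

/-! Write `{A₁, B₁} = {S₁ + a, S₁ + b}` and `{A₂, B₂} = {S₂ + a, S₂ + b}` with `S₁, S₂` sets of
`k - 1` tokens on `G - {a, b}`. The token graph `F_{k-1}(G - {a, b})` is
connected, so it has a shortest path `S₁ = T₀, …, T_m = S₂`. The sets `Tᵢ + a` and `Tᵢ + b` span an
induced ladder in `F_k(G)`: `Tᵢ + c ∼ Tⱼ + c` iff `Tᵢ ∼ Tⱼ`, which on a shortest path means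
`|i - j| = 1`, and `Tᵢ + a ∼ Tⱼ + b` iff `Tᵢ = Tⱼ`. -/

open SimpleGraph

namespace Finset

variable {V : Type*} [DecidableEq V]

lemma card_insert_erase_of_mem_of_notMem_s14 {S : Finset V} {x y : V} (hx : x ∈ S) (hy : y ∉ S) :
    (insert y (S.erase x)).card = S.card := by
  rw [card_insert_of_notMem fun h => hy (mem_of_mem_erase h), card_erase_add_one hx]

lemma symmDiff_insert_insert_of_notMem {c : V} {X Y : Finset V} (hX : c ∉ X) (hY : c ∉ Y) :
    symmDiff (insert c X) (insert c Y) = symmDiff X Y := by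
  ext z; simp only [mem_symmDiff, mem_insert]; grind

lemma symmDiff_insert_insert_self {a b : V} {X : Finset V} (hab : a ≠ b) (ha : a ∉ X)
    (hb : b ∉ X) : symmDiff (insert a X) (insert b X) = {a, b} := by
  ext z; simp only [mem_symmDiff, mem_insert, mem_singleton]; grind

lemma eq_of_symmDiff_insert_insert_eq_pair {a b x y : V} {X Y : Finset V} (hab : a ≠ b)
    (haX : a ∉ X) (hbX : b ∉ X) (haY : a ∉ Y) (hbY : b ∉ Y)
    (h : symmDiff (insert a X) (insert b Y) = {x, y}) : X = Y := by
  have key : ∀ w, w ∈ symmDiff (insert a X) (insert b Y) ↔ w = x ∨ w = y := by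
    simp [h]
  rw [← symmDiff_eq_empty, eq_empty_iff_forall_notMem]
  intro z hz
  have := key a; have := key b; have := key z
  simp only [mem_symmDiff, mem_insert] at *
  grind

lemma exists_eq_insert_of_symmDiff_eq_pair {a b : V} {A B : Finset V} (hcard : A.card = B.card)
    (h : symmDiff A B = {a, b}) :
    ∃ X, a ∉ X ∧ b ∉ X ∧
      (A = insert a X ∧ B = insert b X ∨ A = insert b X ∧ B = insert a X) := by
  have key : ∀ w, w ∈ A \ B ∨ w ∈ B \ A ↔ w = a ∨ w = b := by
    intro w; rw [mem_sdiff, mem_sdiff, ← mem_symmDiff, h]; simp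
  -- as `#(A \ B) = #(B \ A)`, one of `a, b` lies in `A \ B` and the other in `B \ A`
  have other : ∀ {A B : Finset V}, A.card = B.card →
      (∀ w, w ∈ A \ B ∨ w ∈ B \ A ↔ w = a ∨ w = b) → a ∈ A \ B → b ∈ B \ A := by
    intro A B hcard key ha
    by_contra hb
    have : B \ A = ∅ := eq_empty_of_forall_notMem fun w hw => by grind
    grind [card_sdiff_comm hcard, card_eq_zero]
  refine ⟨A ∩ B, by grind, by grind, ?_⟩
  rcases (key a).mpr (Or.inl rfl) with ha | ha
  · have hb := other hcard key ha
    left; constructor <;> ext z <;> grind [key z]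
  · have hb := other hcard.symm (fun w => by rw [or_comm, key]) ha
    right; constructor <;> ext z <;> grind [key z]

lemma map_symmDiff {α β : Type*} [DecidableEq α] [DecidableEq β] (f : α ↪ β)
    (S T : Finset α) : (symmDiff S T).map f = symmDiff (S.map f) (T.map f) := by
  simp only [symmDiff_def, sup_eq_union, map_union, map_sdiff]

lemma notMem_map_subtype_of_notMem {α : Type*} {s : Set α} {c : α} (hc : c ∉ s)
    (S : Finset s) : c ∉ S.map (Function.Embedding.subtype _) := by
  simp only [mem_map, Function.Embedding.coe_subtype, not_exists, not_and]
  exact fun x _ hx => hc (hx ▸ x.2)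

end Finset

open Finset

namespace SimpleGraph.Walk

variable {V : Type*} {G : SimpleGraph V} {u v : V}

lemma adj_getVert_iff_of_length_eq_dist {p : G.Walk u v} (hp : p.length = G.dist u v)
    {i j : ℕ} (hi : i ≤ p.length) (hj : j ≤ p.length) :
    G.Adj (p.getVert i) (p.getVert j) ↔ i + 1 = j ∨ j + 1 = i := by
  have no_chord : ∀ {i j}, i < j → j ≤ p.length → G.Adj (p.getVert i) (p.getVert j) →
      i + 1 = j := by
    intro i j hij hj h
    have := dist_le ((p.take i).append (cons h (p.drop j)))
    simp only [length_append, take_length, length_cons, drop_length] at this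
    omega
  constructor
  · intro h
    rcases lt_trichotomy i j with hij | rfl | hij
    · exact Or.inl (no_chord hij hj h)
    · exact (h.ne rfl).elim
    · exact Or.inr (no_chord hij hi h.symm)
  · rintro (rfl | rfl)
    · exact p.adj_getVert_succ (by omega)
    · exact (p.adj_getVert_succ (by omega)).symm

end SimpleGraph.Walk

section Ladder

variable {α β : Type*} {F : SimpleGraph β} {a b a' b' : β}

lemma ConnectedByLadder.swap_left (h : ConnectedByLadder F a b a' b') :
    ConnectedByLadder F b a a' b' := by
  rcases h with h | ⟨m, u, v, hm, hl, h0, hlast⟩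
  · exact Or.inl (Set.pair_comm a b ▸ h)
  · exact Or.inr ⟨m, u, v, hm, hl, h0.symm, hlast⟩

lemma ConnectedByLadder.swap_right (h : ConnectedByLadder F a b a' b') :
    ConnectedByLadder F a b b' a' := by
  rcases h with h | ⟨m, u, v, hm, hl, h0, hlast⟩
  · exact Or.inl (Set.pair_comm a' b' ▸ h)
  · exact Or.inr ⟨m, u, v, hm, hl, h0, hlast.symm⟩

/-- A geodesic of `H` between `x` and `y` lifts along `ι₁` and `ι₂` to the two sides of a ladder. -/
theorem connectedByLadder_of_reachable {H : SimpleGraph α} (ι₁ ι₂ : H ↪g F)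
    (hne : ∀ x y, ι₁ x ≠ ι₂ y) (hrung : ∀ x y, F.Adj (ι₁ x) (ι₂ y) ↔ x = y) {x y : α}
    (hxy : H.Reachable x y) : ConnectedByLadder F (ι₁ x) (ι₂ x) (ι₁ y) (ι₂ y) := by
  by_cases h : x = y
  · exact Or.inl (h ▸ rfl)
  obtain ⟨p, hp⟩ := hxy.exists_walk_length_eq_dist
  have hle (i : Fin (p.length + 1)) : (i : ℕ) ≤ p.length := Nat.le_of_lt_succ i.2
  have hside (i j : Fin (p.length + 1)) :
      H.Adj (p.getVert i) (p.getVert j) ↔ (i : ℕ) + 1 = j ∨ (j : ℕ) + 1 = i :=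
    Walk.adj_getVert_iff_of_length_eq_dist hp (hle i) (hle j)
  have hinj : Function.Injective fun i : Fin (p.length + 1) => p.getVert i := fun i j hij =>
    Fin.ext ((p.isPath_of_length_eq_dist hp).getVert_injOn (hle i) (hle j) hij)
  refine Or.inr ⟨p.length, fun i => ι₁ (p.getVert i), fun i => ι₂ (p.getVert i),
    hp ▸ hxy.pos_dist_of_ne h, ⟨ι₁.injective.comp hinj, ι₂.injective.comp hinj,
      fun _ _ => hne _ _, fun i j => ι₁.map_adj_iff.trans (hside i j),
      fun i j => ι₂.map_adj_iff.trans (hside i j), fun i j => (hrung _ _).trans hinj.eq_iff⟩,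
    Or.inl ⟨by simp, by simp⟩, Or.inl ⟨by simp, by simp⟩⟩

end Ladder

section TokenGraph

variable {V : Type*} [DecidableEq V] {G : SimpleGraph V} {k : ℕ}

lemma tokenGraph_adj_of_move {S T : {s : Finset V // s.card = k}} {x y : V} (hxy : G.Adj x y)
    (hx : x ∈ S.1) (hy : y ∉ S.1) (hT : T.1 = insert y (S.1.erase x)) :
    (tokenGraph G k).Adj S T :=
  ⟨x, y, hxy, by
    rw [hT]; ext z; simp only [mem_symmDiff, mem_insert, mem_erase, mem_singleton]; grind⟩

/-- The token on `u` can be carried to `v` along any walk: the tokens met on the way are pushed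
ahead first. -/
lemma tokenGraph_reachable_of_walk {u v : V} (p : G.Walk u v) :
    ∀ {S T : {s : Finset V // s.card = k}}, u ∈ S.1 → v ∉ S.1 →
      T.1 = insert v (S.1.erase u) → (tokenGraph G k).Reachable S T := by
  induction p with
  | nil => exact fun hu hv _ => absurd hu hv
  | @cons u w v huw q ih =>
    intro S T hu hv hT
    by_cases hw : w ∈ S.1
    · let S' : {s : Finset V // s.card = k} :=
        ⟨insert v (S.1.erase w), (card_insert_erase_of_mem_of_notMem_s14 hw hv).trans S.2⟩
      have hwv : w ≠ v := fun h => hv (h ▸ hw)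
      have huS' : u ∈ S'.1 := by grind [huw.ne]
      have hwS' : w ∉ S'.1 := by grind
      refine (ih (T := S') hw hv rfl).trans (tokenGraph_adj_of_move huw huS' hwS' ?_).reachable
      rw [hT]; ext z; grind [huw.ne]
    · let S' : {s : Finset V // s.card = k} :=
        ⟨insert w (S.1.erase u), (card_insert_erase_of_mem_of_notMem_s14 hu hw).trans S.2⟩
      have hSS' : (tokenGraph G k).Adj S S' := tokenGraph_adj_of_move huw hu hw rfl
      by_cases hwv : w = v
      · subst hwv
        exact (Subtype.ext hT : T = S') ▸ hSS'.reachable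
      · refine hSS'.reachable.trans (ih (mem_insert_self _ _) (by grind) ?_)
        rw [hT]; ext z; grind

theorem tokenGraph_preconnected (hG : G.Preconnected) (k : ℕ) :
    (tokenGraph G k).Preconnected := by
  intro S T
  induction hd : (S.1 \ T.1).card generalizing S with
  | zero =>
    have hST : S.1 ⊆ T.1 := sdiff_eq_empty_iff_subset.mp (card_eq_zero.mp hd)
    rw [Subtype.ext (eq_of_subset_of_card_le hST (T.2.trans S.2.symm).le)]
  | succ n ih =>
    obtain ⟨u, hu⟩ : (S.1 \ T.1).Nonempty := card_pos.mp (by omega)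
    obtain ⟨v, hv⟩ : (T.1 \ S.1).Nonempty :=
      card_pos.mp (by rw [← card_sdiff_comm (S.2.trans T.2.symm)]; omega)
    rw [mem_sdiff] at hu hv
    let S' : {s : Finset V // s.card = k} :=
      ⟨insert v (S.1.erase u), (card_insert_erase_of_mem_of_notMem_s14 hu.1 hv.2).trans S.2⟩
    refine (tokenGraph_reachable_of_walk (hG u v).some hu.1 hv.2 (T := S') rfl).trans (ih S' ?_)
    have : S'.1 \ T.1 = (S.1 \ T.1).erase u := by ext z; grind
    rw [this, card_erase_of_mem (mem_sdiff.mpr hu), hd, Nat.add_sub_cancel]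

end TokenGraph

section AddToken

variable {V : Type*} [DecidableEq V] (G : SimpleGraph V)

lemma SimpleGraph.exists_adj_map_subtype_eq_pair_iff {s : Set V} (D : Finset s) :
    (∃ x y, G.Adj x y ∧ D.map (Function.Embedding.subtype _) = {x, y}) ↔
      ∃ x y, (G.induce s).Adj x y ∧ D = {x, y} := by
  constructor
  · rintro ⟨x, y, hxy, hD⟩
    obtain ⟨x, -, rfl⟩ := mem_map.mp (hD ▸ mem_insert_self _ _ : _ ∈ D.map _)
    obtain ⟨y, -, rfl⟩ :=
      mem_map.mp (hD ▸ mem_insert_of_mem (mem_singleton_self _) : _ ∈ D.map _)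
    exact ⟨x, y, hxy, Finset.map_injective (Function.Embedding.subtype _) (by simpa using hD)⟩
  · rintro ⟨x, y, hxy, rfl⟩
    exact ⟨x, y, hxy, by simp⟩

def tokenGraph.addToken (s : Set V) (c : V) (hc : c ∉ s) (k : ℕ) :
    tokenGraph (G.induce s) k ↪g tokenGraph G (k + 1) where
  toFun S := ⟨insert c (S.1.map (Function.Embedding.subtype _)), by
    rw [card_insert_of_notMem (notMem_map_subtype_of_notMem hc S.1), card_map, S.2]⟩
  inj' S T h := by
    have := congrArg (fun A => A.1.erase c) h
    simp only [erase_insert (notMem_map_subtype_of_notMem hc _)] at this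
    exact Subtype.ext (Finset.map_injective _ this)
  map_rel_iff' {S T} := by
    change (∃ x y, G.Adj x y ∧ symmDiff (insert c (S.1.map _)) (insert c (T.1.map _)) = {x, y})
      ↔ _
    rw [symmDiff_insert_insert_of_notMem (notMem_map_subtype_of_notMem hc _)
      (notMem_map_subtype_of_notMem hc _), ← Finset.map_symmDiff,
      exists_adj_map_subtype_eq_pair_iff]
    rfl

variable {G} {s : Set V} {a b : V} {k : ℕ}

@[simp]
lemma tokenGraph.coe_addToken {c : V} (hc : c ∉ s) (S : {S : Finset s // S.card = k}) :
    (addToken G s c hc k S).1 = insert c (S.1.map (Function.Embedding.subtype _)) :=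
  rfl

lemma tokenGraph.addToken_ne_addToken (hab : a ≠ b) (ha : a ∉ s) (hb : b ∉ s)
    (S T : {S : Finset s // S.card = k}) : addToken G s a ha k S ≠ addToken G s b hb k T := by
  intro h
  have : a ∈ (addToken G s a ha k S).1 := mem_insert_self _ _
  rw [h, coe_addToken] at this
  rcases mem_insert.mp this with h | h
  exacts [hab h, notMem_map_subtype_of_notMem ha _ h]

lemma tokenGraph.adj_addToken_addToken_iff (hab : G.Adj a b) (ha : a ∉ s) (hb : b ∉ s)
    (S T : {S : Finset s // S.card = k}) :
    (tokenGraph G (k + 1)).Adj (addToken G s a ha k S) (addToken G s b hb k T) ↔ S = T := by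
  have haS := notMem_map_subtype_of_notMem ha S.1
  have haT := notMem_map_subtype_of_notMem ha T.1
  have hbS := notMem_map_subtype_of_notMem hb S.1
  have hbT := notMem_map_subtype_of_notMem hb T.1
  constructor
  · rintro ⟨x, y, -, h⟩
    exact Subtype.ext (Finset.map_injective _
      (eq_of_symmDiff_insert_insert_eq_pair hab.ne haS hbS haT hbT h))
  · rintro rfl
    exact ⟨a, b, hab, symmDiff_insert_insert_self hab.ne haS hbS⟩

lemma tokenGraph.exists_eq_addToken_of_symmDiff_eq (ha : a ∉ s) (hb : b ∉ s)
    (hs : ∀ v, v ≠ a → v ≠ b → v ∈ s) {A B : {S : Finset V // S.card = k + 1}}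
    (h : symmDiff A.1 B.1 = {a, b}) :
    ∃ S, A = addToken G s a ha k S ∧ B = addToken G s b hb k S ∨
      A = addToken G s b hb k S ∧ B = addToken G s a ha k S := by
  classical
  obtain ⟨X, haX, hbX, hAB⟩ := exists_eq_insert_of_symmDiff_eq_pair (A.2.trans B.2.symm) h
  have hXs : ∀ v ∈ X, v ∈ s := fun v hv => hs v (by grind) (by grind)
  have hX : (X.subtype (· ∈ s)).map (Function.Embedding.subtype _) = X :=
    subtype_map_of_mem hXs
  have hcard : (X.subtype (· ∈ s)).card = k := by
    have := A.2
    rcases hAB with ⟨hA, -⟩ | ⟨hA, -⟩ <;>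
      rw [hA, card_insert_of_notMem (by assumption), ← hX, card_map] at this <;> omega
  let S : {S : Finset s // S.card = k} := ⟨X.subtype (· ∈ s), hcard⟩
  have hS (c : V) (hc : c ∉ s) : insert c X = (addToken G s c hc k S).1 := by
    rw [coe_addToken, hX]
  refine ⟨S, ?_⟩
  rcases hAB with ⟨hA, hB⟩ | ⟨hA, hB⟩
  exacts [Or.inl ⟨Subtype.ext (hA.trans (hS a ha)), Subtype.ext (hB.trans (hS b hb))⟩,
    Or.inr ⟨Subtype.ext (hA.trans (hS b hb)), Subtype.ext (hB.trans (hS a ha))⟩]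

end AddToken

open tokenGraph in
theorem edges_along_edge_connected_by_ladder_general
    {V : Type*} [DecidableEq V]
    (G : SimpleGraph V) (k : ℕ)
    (hk1 : 1 ≤ k)
    (a b : V) (hab : G.Adj a b)
    (hconn : (G.induce {v : V | v ≠ a ∧ v ≠ b}).Connected)
    (A₁ B₁ A₂ B₂ : {s : Finset V // s.card = k})
    (h₁ : symmDiff A₁.1 B₁.1 = {a, b})
    (h₂ : symmDiff A₂.1 B₂.1 = {a, b}) :
    ConnectedByLadder (tokenGraph G k) A₁ B₁ A₂ B₂ := by
  obtain ⟨j, rfl⟩ := Nat.exists_eq_add_of_le' hk1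
  have ha : a ∉ {v : V | v ≠ a ∧ v ≠ b} := fun h => h.1 rfl
  have hb : b ∉ {v : V | v ≠ a ∧ v ≠ b} := fun h => h.2 rfl
  have hs : ∀ v, v ≠ a → v ≠ b → v ∈ {v : V | v ≠ a ∧ v ≠ b} := fun _ => And.intro
  obtain ⟨S₁, hS₁⟩ := exists_eq_addToken_of_symmDiff_eq (G := G) ha hb hs h₁
  obtain ⟨S₂, hS₂⟩ := exists_eq_addToken_of_symmDiff_eq (G := G) ha hb hs h₂
  have hladder := connectedByLadder_of_reachable (addToken G _ a ha j) (addToken G _ b hb j)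
    (addToken_ne_addToken hab.ne ha hb) (adj_addToken_addToken_iff hab ha hb)
    (tokenGraph_preconnected hconn.preconnected j S₁ S₂)
  rcases hS₁ with ⟨rfl, rfl⟩ | ⟨rfl, rfl⟩ <;> rcases hS₂ with ⟨rfl, rfl⟩ | ⟨rfl, rfl⟩
  exacts [hladder, hladder.swap_right, hladder.swap_left, hladder.swap_left.swap_right]

/-- if G is (C4,diamond)-free, ab an edge of G with G∖{a,b}
connected, then any two edges of F_k(G) corresponding to moving a token along
ab are connected by a ladder. -/
theorem edges_along_edge_connected_by_ladder
    {V : Type*} [Fintype V] [DecidableEq V]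
    (G : SimpleGraph V) (hG : C4DiamondFree G) (n k : ℕ)
    (hn : Fintype.card V = n) (hk1 : 1 ≤ k) (hk2 : k ≤ n - 1)
    (a b : V) (hab : G.Adj a b)
    (hconn : (G.induce {v : V | v ≠ a ∧ v ≠ b}).Connected)
    (A₁ B₁ A₂ B₂ : {s : Finset V // s.card = k})
    (h₁ : symmDiff A₁.1 B₁.1 = {a, b})
    (h₂ : symmDiff A₂.1 B₂.1 = {a, b}) :
    ConnectedByLadder (tokenGraph G k) A₁ B₁ A₂ B₂ :=
  edges_along_edge_connected_by_ladder_general G k hk1 a b hab hconn A₁ B₁ A₂ B₂ h₁ h₂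
end

section
/- Let G and H be isomorphic graphs on n ≥ 3 vertices, 1 ≤ k ≤ n−1, and ψ : F_k(H) → F_k(G) an isomorphism. Suppose f : V(H) → V(G) is a function such that for every vertex u of H, ψ(κ_H(u,k)) = κ_G(f(u),k), where κ(w,k) denotes the set of k-subsets containing w. Then f is injective (hence bijective), f is a graph isomorphism from H to G, and ψ = ι(f), i.e., ψ(A) = {f(v) : v ∈ A} for every k-subset A of V(H). -/
open Finset

/-! Since `1 ≤ k < n`, any two distinct vertices are separated by a `k`-set, so `f` is injective;
then `ψ A ⊇ f(A)` with equal cardinalities gives `ψ A = f(A)`. Finally every pair `u ≠ v` is the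
symmetric difference of two `k`-sets `A, B`, which are adjacent in `F_k(H)` iff `uv ∈ E(H)`, and
their images are adjacent in `F_k(G)` iff `f(u) f(v) ∈ E(G)`. -/

section TokenGraph

variable {W : Type*} [DecidableEq W]

lemma SimpleGraph.adj_of_pair_eq {G : SimpleGraph W} {a b c d : W} (hab : G.Adj a b)
    (h : ({a, b} : Finset W) = {c, d}) : G.Adj c d := by
  have h' : ({a, b} : Set W) = {c, d} := by simpa using congrArg ((↑) : Finset W → Set W) h
  rcases Set.pair_eq_pair_iff.mp h' with ⟨rfl, rfl⟩ | ⟨rfl, rfl⟩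
  · exact hab
  · exact hab.symm

lemma tokenGraph_adj_iff_of_symmDiff_eq_pair (G : SimpleGraph W) {k : ℕ}
    {A B : {s : Finset W // s.card = k}} {u v : W} (h : symmDiff A.1 B.1 = {u, v}) : (tokenGraph G k).Adj A B ↔ G.Adj u v := by
  constructor
  · rintro ⟨a, b, hab, h'⟩
    exact G.adj_of_pair_eq hab (h'.symm.trans h)
  · exact fun hadj => ⟨u, v, hadj, h⟩

variable [Fintype W] {k : ℕ}

lemma exists_card_eq_mem_notMem (hk1 : 1 ≤ k) (hk : k < Fintype.card W) {u v : W}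
    (huv : u ≠ v) : ∃ A : Finset W, A.card = k ∧ u ∈ A ∧ v ∉ A := by
  have hcard : k ≤ (univ.erase v).card := by
    rw [card_erase_of_mem (mem_univ v), card_univ]
    omega
  obtain ⟨A, huA, hAv, hAk⟩ :=
    exists_subsuperset_card_eq (s := {u}) (by simp [huv]) (by simpa using hk1) hcard
  exact ⟨A, hAk, huA (mem_singleton_self u), fun hv => (mem_erase.mp (hAv hv)).1 rfl⟩

lemma exists_symmDiff_eq_pair (hk1 : 1 ≤ k) (hk : k < Fintype.card W) {u v : W}
    (huv : u ≠ v) : ∃ A B : {s : Finset W // s.card = k}, symmDiff A.1 B.1 = {u, v} := by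
  obtain ⟨A, hAk, hu, hv⟩ := exists_card_eq_mem_notMem hk1 hk huv
  have hBk : (insert v (A.erase u)).card = k := by
    rw [card_insert_of_notMem fun h => hv (mem_of_mem_erase h), card_erase_of_mem hu, hAk]
    omega
  refine ⟨⟨A, hAk⟩, ⟨_, hBk⟩, ?_⟩
  ext x
  by_cases hxu : x = u <;> by_cases hxv : x = v <;> simp_all [mem_symmDiff]

lemma injective_of_forall_mem_iff {V : Type*} {f : W → V}
    {φ : {s : Finset W // s.card = k} → Finset V} (hk1 : 1 ≤ k) (hk : k < Fintype.card W)
    (hf : ∀ u A, u ∈ A.1 ↔ f u ∈ φ A) : Function.Injective f := by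
  intro u v huv
  by_contra huv'
  obtain ⟨A, hAk, hu, hv⟩ := exists_card_eq_mem_notMem hk1 hk huv'
  exact hv ((hf v ⟨A, hAk⟩).mpr (huv ▸ (hf u ⟨A, hAk⟩).mp hu))

end TokenGraph

lemma eq_image_of_forall_mem_imp {V W : Type*} [DecidableEq V] {k : ℕ} {f : W → V}
    {φ : {s : Finset W // s.card = k} → Finset V} (hinj : Function.Injective f)
    (hf : ∀ u A, u ∈ A.1 → f u ∈ φ A) (hφ : ∀ A, (φ A).card = k)
    (A : {s : Finset W // s.card = k}) : φ A = A.1.image f := by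
  refine (eq_of_subset_of_card_le (image_subset_iff.mpr fun u => hf u A) ?_).symm
  rw [card_image_of_injective _ hinj, A.2, hφ]

theorem token_iso_is_induced_general
    {V W : Type*} [Fintype V] [DecidableEq V] [Fintype W] [DecidableEq W]
    (G : SimpleGraph V) (H : SimpleGraph W) (n k : ℕ)
    (hnV : Fintype.card V = n) (hnW : Fintype.card W = n)
    (hk1 : 1 ≤ k) (hk2 : k ≤ n - 1)
    (ψ : tokenGraph H k ≃g tokenGraph G k) (f : W → V)
    (hf : ∀ (u : W) (A : {s : Finset W // s.card = k}),
      u ∈ A.1 ↔ f u ∈ (ψ A).1) :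
    Function.Bijective f ∧
    (∀ u v : W, H.Adj u v ↔ G.Adj (f u) (f v)) ∧
    (∀ A : {s : Finset W // s.card = k}, (ψ A).1 = A.1.image f) := by
  have hk : k < Fintype.card W := by omega
  have hinj : Function.Injective f := injective_of_forall_mem_iff hk1 hk hf
  have himg : ∀ A, (ψ A).1 = A.1.image f :=
    eq_image_of_forall_mem_imp hinj (fun u A => (hf u A).mp) fun A => (ψ A).2
  refine ⟨(Fintype.bijective_iff_injective_and_card f).mpr ⟨hinj, hnW.trans hnV.symm⟩,
    fun u v => ?_, himg⟩
  rcases eq_or_ne u v with rfl | huv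
  · simp
  obtain ⟨A, B, hAB⟩ := exists_symmDiff_eq_pair hk1 hk huv
  have hψAB : symmDiff (ψ A).1 (ψ B).1 = {f u, f v} := by
    rw [himg, himg, ← image_symmDiff _ _ hinj, hAB, image_insert, image_singleton]
  rw [← tokenGraph_adj_iff_of_symmDiff_eq_pair H hAB, ← ψ.map_adj_iff,
    tokenGraph_adj_iff_of_symmDiff_eq_pair G hψAB]

/-- if an isomorphism ψ : F_k(H) → F_k(G) maps, for every vertex
u of H, the k-sets containing u exactly onto the k-sets containing f(u), then
f is a bijection, a graph isomorphism from H to G, and ψ = ι(f). -/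
theorem token_iso_is_induced
    {V W : Type*} [Fintype V] [DecidableEq V] [Fintype W] [DecidableEq W]
    (G : SimpleGraph V) (H : SimpleGraph W) (n k : ℕ)
    (hnV : Fintype.card V = n) (hnW : Fintype.card W = n) (hn3 : 3 ≤ n)
    (hk1 : 1 ≤ k) (hk2 : k ≤ n - 1)
    (e : H ≃g G)
    (ψ : tokenGraph H k ≃g tokenGraph G k) (f : W → V)
    (hf : ∀ (u : W) (A : {s : Finset W // s.card = k}),
      u ∈ A.1 ↔ f u ∈ (ψ A).1) :
    Function.Bijective f ∧
    (∀ u v : W, H.Adj u v ↔ G.Adj (f u) (f v)) ∧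
    (∀ A : {s : Finset W // s.card = k}, (ψ A).1 = A.1.image f) :=
  token_iso_is_induced_general G H n k hnV hnW hk1 hk2 ψ f hf
end
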